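/- arXiv:math/0508425 — 9 statements merged into one kernel-verified Lean document; each statement's English description precedes it below -/
import Mathlib

section
/- Let -π ≤ α < β ≤ π with β - α > π, let (p_k) be a sequence of complex numbers, and let σ > 0. Suppose P₁ and P₂ are analytic, single-valued functions on the sector S(α,β) and that for i = 1,2 there exist positive constants M_i, a_i such that for every integer n ≥ 0 and every z ∈ S(α,β) with |z| ≥ σ one has |P_i(z) - Σ_{k=0}^{n-1} p_k z^{-(k+1)}| ≤ M_i · n! / (a_i^n |z|^{n+1}). Then P₁(z) = P₂(z) for all z ∈ S(α,β). -/
/-!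
Put `F = P₁ - P₂`. Both functions have the same expansion, so for every `n` the norm `‖F z‖` is
at most `(M₁ + M₂) n! / (a^n |z|^(n+1))` with `a = min a₁ a₂`, and the choice `n ≈ a|z|/2` gives
`‖F z‖ ≤ C e^(-b|z|)`. The map `φ(ζ) = e^(i(α+β)/2) ζ^ρ` with `ρ = (β - α)/π` sends the right
half-plane into `S(α,β)`, and `ρ > 1` because the opening exceeds `π`. So `G(w) = F(φ(w + R))`
is bounded on the closed right half-plane and decays like `exp(-b x^ρ)`, faster than every
`e^(-nx)`, along the positive real axis. The Phragmén–Lindelöf principle forces `G = 0`; hence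
`F` vanishes on a ray of the sector, and on the whole connected sector by the identity theorem.
-/

open Complex Filter Topology Set Asymptotics
open scoped Real Nat

def sector (α β : ℝ) : Set ℂ := {z | z ≠ 0 ∧ α < z.arg ∧ z.arg < β}

lemma isOpen_sector (α : ℝ) {β : ℝ} (hβ : β ≤ π) : IsOpen (sector α β) := by
  rw [isOpen_iff_mem_nhds]
  rintro z ⟨hz, hαz, hzβ⟩
  have hslit : z ∈ slitPlane := mem_slitPlane_iff_arg.2 ⟨(hzβ.trans_le hβ).ne, hz⟩
  filter_upwards [continuousAt_arg hslit (Ioo_mem_nhds hαz hzβ),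
    isOpen_compl_singleton.mem_nhds hz] with w hw hw0
  exact ⟨hw0, hw.1, hw.2⟩

lemma sector_eq_image_polar {α β : ℝ} (hα : -π ≤ α) (hβ : β ≤ π) :
    sector α β = (fun p : ℝ × ℝ ↦ (p.1 : ℂ) * exp (p.2 * I)) '' (Ioi 0 ×ˢ Ioo α β) := by
  ext z
  constructor
  · rintro ⟨hz, hαz, hzβ⟩
    exact ⟨(‖z‖, z.arg), ⟨norm_pos_iff.2 hz, hαz, hzβ⟩, norm_mul_exp_arg_mul_I z⟩
  · rintro ⟨⟨r, θ⟩, ⟨hr, hαθ, hθβ⟩, rfl⟩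
    have harg : arg (r * exp (θ * I)) = θ := by
      rw [arg_real_mul _ hr, arg_exp_mul_I, toIocMod_eq_self]
      constructor <;> linarith
    refine ⟨mul_ne_zero (ofReal_ne_zero.2 (ne_of_gt hr)) (exp_ne_zero _), ?_, ?_⟩ <;>
      rw [harg] <;> assumption

lemma isPreconnected_sector {α β : ℝ} (hα : -π ≤ α) (hβ : β ≤ π) :
    IsPreconnected (sector α β) := by
  rw [sector_eq_image_polar hα hβ]
  exact (isPreconnected_Ioi.prod isPreconnected_Ioo).image _ (by fun_prop)

lemma arg_exp_mul_I_mul_cpow {ζ : ℂ} (hζ : ζ ≠ 0) {θ ρ : ℝ}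
    (h : θ + ρ * arg ζ ∈ Ioc (-π) π) :
    arg (exp (θ * I) * ζ ^ (ρ : ℂ)) = θ + ρ * arg ζ := by
  have him : (θ * I + log ζ * ρ).im = θ + ρ * arg ζ := by simp [log_im, mul_comm]
  rw [cpow_def_of_ne_zero hζ, ← exp_add, arg_exp, him, toIocMod_eq_self]
  simpa [add_comm (-π), ← sub_eq_add_neg, two_mul] using h

noncomputable def sectorMap (α β : ℝ) (ζ : ℂ) : ℂ :=
  exp (((α + β) / 2 : ℝ) * I) * ζ ^ (((β - α) / π : ℝ) : ℂ)

lemma sectorMap_mem_sector {α β : ℝ} (hα : -π ≤ α) (hβ : β ≤ π) (hαβ : α < β) {ζ : ℂ}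
    (hζ : 0 < ζ.re) : sectorMap α β ζ ∈ sector α β := by
  have hζ0 : ζ ≠ 0 := fun h ↦ by simp [h] at hζ
  have hdev : |(β - α) / π * arg ζ| < (β - α) / 2 := by
    rw [abs_mul, abs_of_pos (div_pos (by linarith) Real.pi_pos)]
    calc (β - α) / π * |arg ζ| < (β - α) / π * (π / 2) := by
          gcongr
          exact abs_arg_lt_pi_div_two_iff.2 (Or.inl hζ)
      _ = (β - α) / 2 := by field_simp
  obtain ⟨hlo, hhi⟩ := abs_lt.1 hdev
  rw [sector, mem_ofPred_eq, sectorMap, arg_exp_mul_I_mul_cpow hζ0 ⟨by linarith, by linarith⟩]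
  exact ⟨mul_ne_zero (exp_ne_zero _) (by rw [Ne, cpow_eq_zero_iff]; tauto), by linarith,
    by linarith⟩

lemma norm_sectorMap (α β : ℝ) (ζ : ℂ) : ‖sectorMap α β ζ‖ = ‖ζ‖ ^ ((β - α) / π) := by
  rw [sectorMap, norm_mul, norm_exp_ofReal_mul_I, one_mul, norm_cpow_real]

lemma differentiableAt_sectorMap (α β : ℝ) {ζ : ℂ} (hζ : ζ ∈ slitPlane) :
    DifferentiableAt ℂ (sectorMap α β) ζ :=
  (differentiableAt_id.cpow_const hζ).const_mul _

lemma sectorMap_ofReal (α β : ℝ) {t : ℝ} (ht : 0 ≤ t) :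
    sectorMap α β t = exp (((α + β) / 2 : ℝ) * I) * ↑(t ^ ((β - α) / π)) := by
  rw [sectorMap, ofReal_cpow ht]

lemma norm_sub_le_factorial_div_of_approx {E : Type*} [SeminormedAddCommGroup E] {u v s : E}
    {M₁ M₂ a₁ a₂ t : ℝ} (n : ℕ) (hM₁ : 0 ≤ M₁) (hM₂ : 0 ≤ M₂) (ha₁ : 0 < a₁) (ha₂ : 0 < a₂)
    (ht : 0 < t) (h₁ : ‖u - s‖ ≤ M₁ * n ! / (a₁ ^ n * t ^ (n + 1)))
    (h₂ : ‖v - s‖ ≤ M₂ * n ! / (a₂ ^ n * t ^ (n + 1))) :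
    ‖u - v‖ ≤ (M₁ + M₂) * n ! / (min a₁ a₂ ^ n * t ^ (n + 1)) := by
  have ha : 0 < min a₁ a₂ := lt_min ha₁ ha₂
  calc ‖u - v‖ ≤ ‖u - s‖ + ‖v - s‖ := norm_sub_rev s v ▸ norm_sub_le_norm_sub_add_norm_sub u s v
    _ ≤ M₁ * n ! / (min a₁ a₂ ^ n * t ^ (n + 1)) + M₂ * n ! / (min a₁ a₂ ^ n * t ^ (n + 1)) := by
        gcongr ?_ + ?_
        · exact h₁.trans (by gcongr; exact min_le_left _ _)
        · exact h₂.trans (by gcongr; exact min_le_right _ _)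
    _ = (M₁ + M₂) * n ! / (min a₁ a₂ ^ n * t ^ (n + 1)) := by ring

lemma le_mul_exp_neg_of_forall_le_factorial_div {M a t x : ℝ} (hM : 0 ≤ M) (ha : 0 < a)
    (ht : 0 < t) (hx : ∀ n : ℕ, x ≤ M * n ! / (a ^ n * t ^ (n + 1))) :
    x ≤ 2 * M / t * Real.exp (-(a * Real.log 2 / 2) * t) := by
  set n := ⌊a * t / 2⌋₊
  have hn_le : (n : ℝ) ≤ a * t / 2 := Nat.floor_le (by positivity)
  have hn_gt : a * t / 2 < n + 1 := Nat.lt_floor_add_one _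
  have hfact : (n ! : ℝ) ≤ (a * t) ^ n * (1 / 2) ^ n := by
    calc (n ! : ℝ) ≤ (n : ℝ) ^ n := mod_cast Nat.factorial_le_pow n
      _ ≤ (a * t / 2) ^ n := by gcongr
      _ = (a * t) ^ n * (1 / 2) ^ n := by rw [← mul_pow]; ring
  have hhalf : (1 / 2 : ℝ) ^ n ≤ 2 * Real.exp (-(a * Real.log 2 / 2) * t) := by
    have hpow : (1 / 2 : ℝ) ^ n = Real.exp (-(n * Real.log 2)) := by
      rw [Real.exp_neg, Real.exp_nat_mul, Real.exp_log two_pos, one_div, inv_pow]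
    rw [hpow]
    calc Real.exp (-(n * Real.log 2)) ≤ Real.exp (Real.log 2 + -(a * Real.log 2 / 2) * t) := by
          gcongr
          nlinarith [Real.log_pos one_lt_two]
      _ = 2 * Real.exp (-(a * Real.log 2 / 2) * t) := by rw [Real.exp_add, Real.exp_log two_pos]
  calc x ≤ M * n ! / (a ^ n * t ^ (n + 1)) := hx n
    _ = M / t * (n ! / (a * t) ^ n) := by field_simp; ring
    _ ≤ M / t * (1 / 2) ^ n := by
        gcongr
        rw [div_le_iff₀ (by positivity)]
        linarith
    _ ≤ M / t * (2 * Real.exp (-(a * Real.log 2 / 2) * t)) := by gcongr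
    _ = 2 * M / t * Real.exp (-(a * Real.log 2 / 2) * t) := by ring

lemma tendsto_mul_sub_mul_rpow_atBot (c : ℝ) {b ρ : ℝ} (hb : 0 < b) (hρ : 1 < ρ) :
    Tendsto (fun x : ℝ ↦ c * x - b * x ^ ρ) atTop atBot := by
  have hfactor : Tendsto (fun x : ℝ ↦ x * (c - b * x ^ (ρ - 1))) atTop atBot :=
    tendsto_id.atTop_mul_atBot₀ <| tendsto_atBot_add_const_left _ c <|
      (tendsto_rpow_atTop (sub_pos.2 hρ)).const_mul_atTop_of_neg (neg_lt_zero.2 hb) |>.congr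
        fun x ↦ by ring
  refine hfactor.congr' ?_
  filter_upwards [eventually_gt_atTop 0] with x hx
  rw [mul_sub, ← mul_assoc, mul_comm x b, mul_assoc, ← Real.rpow_one_add' hx.le (by linarith)]
  ring_nf

lemma superpolynomialDecay_exp_of_le_exp_neg_rpow {f : ℝ → ℝ} {C b ρ : ℝ} (hb : 0 < b)
    (hρ : 1 < ρ) (hf : ∀ x, 0 ≤ x → 0 ≤ f x ∧ f x ≤ C * Real.exp (-b * x ^ ρ)) :
    SuperpolynomialDecay atTop Real.exp f := by
  intro n
  have hlim : Tendsto (fun x ↦ C * Real.exp (n * x - b * x ^ ρ)) atTop (𝓝 0) := by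
    simpa using (Real.tendsto_exp_atBot.comp (tendsto_mul_sub_mul_rpow_atBot n hb hρ)).const_mul C
  refine squeeze_zero' ?_ ?_ hlim
  · filter_upwards [eventually_ge_atTop 0] with x hx
    exact mul_nonneg (by positivity) (hf x hx).1
  · filter_upwards [eventually_ge_atTop 0] with x hx
    calc Real.exp x ^ n * f x ≤ Real.exp x ^ n * (C * Real.exp (-b * x ^ ρ)) := by
          gcongr; exact (hf x hx).2
      _ = C * Real.exp (n * x - b * x ^ ρ) := by
          rw [← Real.exp_nat_mul, sub_eq_add_neg, Real.exp_add, neg_mul]; ring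

lemma eqOn_zero_of_bounded_of_le_exp_neg_rpow {E : Type*} [NormedAddCommGroup E]
    [NormedSpace ℂ E] {G : ℂ → E} {C b ρ : ℝ}
    (hG : ∀ w : ℂ, 0 ≤ w.re → DifferentiableAt ℂ G w) (hbdd : ∀ w : ℂ, 0 ≤ w.re → ‖G w‖ ≤ C)
    (hb : 0 < b) (hρ : 1 < ρ) (hdecay : ∀ x : ℝ, 0 ≤ x → ‖G x‖ ≤ C * Real.exp (-b * x ^ ρ)) :
    EqOn G 0 {w : ℂ | 0 ≤ w.re} := by
  refine PhragmenLindelof.eq_zero_on_right_half_plane_of_superexponential_decay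
    ⟨fun w hw ↦ (hG w (le_of_lt hw)).differentiableWithinAt, ?_⟩ ⟨1, one_lt_two, 0, ?_⟩
    (superpolynomialDecay_exp_of_le_exp_neg_rpow hb hρ fun x hx ↦ ⟨norm_nonneg _, hdecay x hx⟩)
    ⟨C, fun x ↦ hbdd _ (by simp)⟩
  · rw [closure_setOfPred_lt_re]
    exact fun w hw ↦ (hG w hw).continuousAt.continuousWithinAt
  · refine IsBigO.of_bound C (mem_inf_of_right (mem_principal.2 fun w hw ↦ ?_))
    simpa using hbdd w (le_of_lt hw)

lemma AnalyticOnNhd.eqOn_zero_of_eventually_eq_zero_on_ray {E : Type*} [NormedAddCommGroup E]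
    [NormedSpace ℂ E] {F : ℂ → E} {S : Set ℂ} (hF : AnalyticOnNhd ℂ F S) (hS : IsPreconnected S)
    {c : ℂ} (hc : c ≠ 0) (hray : ∀ᶠ t : ℝ in atTop, c * t ∈ S ∧ F (c * t) = 0) :
    EqOn F 0 S := by
  obtain ⟨T, hT⟩ := eventually_atTop.1 hray
  have hline : Tendsto (fun t : ℝ ↦ c * t) (𝓝[≠] (T + 1)) (𝓝[≠] (c * ↑(T + 1))) := by
    refine tendsto_nhdsWithin_of_tendsto_nhds_of_eventually_within _
      (Continuous.tendsto (by fun_prop) _ |>.mono_left nhdsWithin_le_nhds) ?_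
    filter_upwards [self_mem_nhdsWithin] with t ht
    rw [mem_compl_singleton_iff, Ne, mul_right_inj' hc, ofReal_inj]
    exact ht
  refine hF.eqOn_zero_of_preconnected_of_frequently_eq_zero hS (hT (T + 1) (by linarith)).1 ?_
  refine hline.frequently (Eventually.frequently ?_)
  filter_upwards [nhdsWithin_le_nhds (Ici_mem_nhds (lt_add_one T))] with t ht
  exact (hT t ht).2

section Watson

variable {E : Type*} [NormedAddCommGroup E] [NormedSpace ℂ E] {α β : ℝ} {F : ℂ → E} {C b σ : ℝ}

lemma eq_zero_sectorMap_of_norm_le_exp_neg (hα : -π ≤ α) (hβ : β ≤ π) (hopening : π < β - α)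
    (hF : DifferentiableOn ℂ F (sector α β)) (hb : 0 < b)
    (hdecay : ∀ z ∈ sector α β, σ ≤ ‖z‖ → ‖F z‖ ≤ C * Real.exp (-b * ‖z‖)) {x : ℝ}
    (hx : 0 ≤ x) : F (sectorMap α β (x + max σ 1)) = 0 := by
  have hρ : 1 < (β - α) / π := (one_lt_div Real.pi_pos).2 hopening
  set R := max σ 1
  have hre : ∀ w : ℂ, 0 ≤ w.re → R ≤ (w + R).re := fun w hw ↦ by simpa using hw
  have hR : 1 ≤ R := le_max_right _ _
  have hmem : ∀ w : ℂ, 0 ≤ w.re → sectorMap α β (w + R) ∈ sector α β := fun w hw ↦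
    sectorMap_mem_sector hα hβ (by linarith [Real.pi_pos]) (by linarith [hre w hw])
  have hlarge : ∀ w : ℂ, 0 ≤ w.re → R ≤ ‖sectorMap α β (w + R)‖ := fun w hw ↦ by
    have hR_le : R ≤ ‖w + R‖ := (hre w hw).trans (re_le_norm _)
    rw [norm_sectorMap]
    exact hR_le.trans (Real.self_le_rpow_of_one_le (hR.trans hR_le) hρ.le)
  have hbound : ∀ w : ℂ, 0 ≤ w.re →
      ‖F (sectorMap α β (w + R))‖ ≤ C * Real.exp (-b * ‖sectorMap α β (w + R)‖) := fun w hw ↦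
    hdecay _ (hmem w hw) ((le_max_left _ _).trans (hlarge w hw))
  have hC : 0 ≤ C :=
    nonneg_of_mul_nonneg_left ((norm_nonneg _).trans (hbound 0 le_rfl)) (Real.exp_pos _)
  refine eqOn_zero_of_bounded_of_le_exp_neg_rpow (C := C) (G := fun w ↦ F (sectorMap α β (w + R)))
    (fun w hw ↦ ?_) (fun w hw ↦ ?_) hb hρ (fun x hx ↦ ?_) (show 0 ≤ (x : ℂ).re by simpa)
  · have hslit : w + R ∈ slitPlane := mem_slitPlane_iff.2 (Or.inl (by linarith [hre w hw]))
    have hφ : DifferentiableAt ℂ (fun w ↦ sectorMap α β (w + R)) w :=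
      DifferentiableAt.comp (g := sectorMap α β) w (differentiableAt_sectorMap α β hslit)
        (differentiableAt_id.add_const (R : ℂ))
    exact (hF.differentiableAt ((isOpen_sector α hβ).mem_nhds (hmem w hw))).comp w hφ
  · refine (hbound w hw).trans (mul_le_of_le_one_right hC (Real.exp_le_one_iff.2 ?_))
    nlinarith [norm_nonneg (sectorMap α β (w + R))]
  · refine (hbound x (by simpa using hx)).trans ?_
    have hxR : ‖(x : ℂ) + R‖ = x + R := by
      rw [← ofReal_add, norm_real, Real.norm_of_nonneg (by linarith)]
    rw [norm_sectorMap, hxR]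
    gcongr C * Real.exp ?_
    rw [neg_mul, neg_mul, neg_le_neg_iff]
    gcongr
    linarith

theorem eqOn_zero_of_norm_le_exp_neg [CompleteSpace E] (hα : -π ≤ α) (hβ : β ≤ π)
    (hopening : π < β - α) (hF : DifferentiableOn ℂ F (sector α β)) (hb : 0 < b)
    (hdecay : ∀ z ∈ sector α β, σ ≤ ‖z‖ → ‖F z‖ ≤ C * Real.exp (-b * ‖z‖)) :
    EqOn F 0 (sector α β) := by
  set ρ := (β - α) / π
  have hρ : 0 < ρ := div_pos (by linarith) Real.pi_pos
  set R := max σ 1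
  refine (hF.analyticOnNhd (isOpen_sector α hβ)).eqOn_zero_of_eventually_eq_zero_on_ray
    (isPreconnected_sector hα hβ) (exp_ne_zero (((α + β) / 2 : ℝ) * I)) ?_
  filter_upwards [(tendsto_rpow_atTop (inv_pos.2 hρ)).eventually_ge_atTop R,
    eventually_ge_atTop 0] with t htR ht
  have hx : 0 ≤ t ^ ρ⁻¹ - R := sub_nonneg.2 htR
  have hray : sectorMap α β (↑(t ^ ρ⁻¹ - R) + R) = exp (((α + β) / 2 : ℝ) * I) * t := by
    rw [← ofReal_add, sub_add_cancel, sectorMap_ofReal α β (by positivity),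
      Real.rpow_inv_rpow ht hρ.ne']
  have hre : 0 < (↑(t ^ ρ⁻¹ - R) + R : ℂ).re := by
    rw [← ofReal_add, sub_add_cancel, ofReal_re]
    linarith [le_max_right σ 1]
  rw [← hray]
  exact ⟨sectorMap_mem_sector hα hβ (by linarith [Real.pi_pos]) hre,
    eq_zero_sectorMap_of_norm_le_exp_neg hα hβ hopening hF hb hdecay hx⟩

end Watson

theorem watson_uniqueness_order_one_general
    (α β : ℝ) (hα : -Real.pi ≤ α) (hβ : β ≤ Real.pi)
    (hopening : Real.pi < β - α)
    (p : ℕ → ℂ) (σ : ℝ) (hσ : 0 < σ)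
    (P₁ P₂ : ℂ → ℂ)
    (hP₁ : DifferentiableOn ℂ P₁ {z : ℂ | z ≠ 0 ∧ α < z.arg ∧ z.arg < β})
    (hP₂ : DifferentiableOn ℂ P₂ {z : ℂ | z ≠ 0 ∧ α < z.arg ∧ z.arg < β})
    (M₁ a₁ : ℝ) (hM₁ : 0 < M₁) (ha₁ : 0 < a₁)
    (hest₁ : ∀ (n : ℕ) (z : ℂ), z ≠ 0 → α < z.arg → z.arg < β →
      σ ≤ ‖z‖ →
      ‖P₁ z - ∑ k ∈ Finset.range n, p k / z ^ (k + 1)‖ ≤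
        M₁ * n.factorial / (a₁ ^ n * ‖z‖ ^ (n + 1)))
    (M₂ a₂ : ℝ) (hM₂ : 0 < M₂) (ha₂ : 0 < a₂)
    (hest₂ : ∀ (n : ℕ) (z : ℂ), z ≠ 0 → α < z.arg → z.arg < β →
      σ ≤ ‖z‖ →
      ‖P₂ z - ∑ k ∈ Finset.range n, p k / z ^ (k + 1)‖ ≤
        M₂ * n.factorial / (a₂ ^ n * ‖z‖ ^ (n + 1))) :
    ∀ z : ℂ, z ≠ 0 → α < z.arg → z.arg < β → P₁ z = P₂ z := by
  have hdecay : ∀ z ∈ sector α β, σ ≤ ‖z‖ → ‖(P₁ - P₂) z‖ ≤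
      2 * (M₁ + M₂) / σ * Real.exp (-(min a₁ a₂ * Real.log 2 / 2) * ‖z‖) := by
    rintro z ⟨hz, hαz, hzβ⟩ hσz
    have hz_pos : 0 < ‖z‖ := hσ.trans_le hσz
    calc ‖(P₁ - P₂) z‖
        ≤ 2 * (M₁ + M₂) / ‖z‖ * Real.exp (-(min a₁ a₂ * Real.log 2 / 2) * ‖z‖) :=
          le_mul_exp_neg_of_forall_le_factorial_div (by positivity) (lt_min ha₁ ha₂) hz_pos
            fun n ↦ norm_sub_le_factorial_div_of_approx n hM₁.le hM₂.le ha₁ ha₂ hz_pos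
              (hest₁ n z hz hαz hzβ hσz) (hest₂ n z hz hαz hzβ hσz)
      _ ≤ 2 * (M₁ + M₂) / σ * Real.exp (-(min a₁ a₂ * Real.log 2 / 2) * ‖z‖) := by gcongr
  intro z hz hαz hzβ
  exact sub_eq_zero.1 <| eqOn_zero_of_norm_le_exp_neg hα hβ hopening (hP₁.sub hP₂)
    (by have := lt_min ha₁ ha₂; positivity) hdecay ⟨hz, hαz, hzβ⟩

/-- **Watson's uniqueness theorem (order 1).**
Let `-π ≤ α < β ≤ π` with `β - α > π`. If `P₁` and `P₂` are analytic on the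
sector `S(α,β) = {z ≠ 0 : α < arg z < β}` and both admit the Gevrey estimates
of order 1 with the same coefficient sequence `p` (with possibly different
constants `Mᵢ, aᵢ`, valid for `|z| ≥ σ`), then `P₁ = P₂` on `S(α,β)`. -/
theorem watson_uniqueness_order_one
    (α β : ℝ) (hα : -Real.pi ≤ α) (hβ : β ≤ Real.pi) (hαβ : α < β)
    (hopening : Real.pi < β - α)
    (p : ℕ → ℂ) (σ : ℝ) (hσ : 0 < σ)
    (P₁ P₂ : ℂ → ℂ)
    (hP₁ : DifferentiableOn ℂ P₁ {z : ℂ | z ≠ 0 ∧ α < z.arg ∧ z.arg < β})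
    (hP₂ : DifferentiableOn ℂ P₂ {z : ℂ | z ≠ 0 ∧ α < z.arg ∧ z.arg < β})
    (M₁ a₁ : ℝ) (hM₁ : 0 < M₁) (ha₁ : 0 < a₁)
    (hest₁ : ∀ (n : ℕ) (z : ℂ), z ≠ 0 → α < z.arg → z.arg < β →
      σ ≤ ‖z‖ →
      ‖P₁ z - ∑ k ∈ Finset.range n, p k / z ^ (k + 1)‖ ≤
        M₁ * n.factorial / (a₁ ^ n * ‖z‖ ^ (n + 1)))
    (M₂ a₂ : ℝ) (hM₂ : 0 < M₂) (ha₂ : 0 < a₂)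
    (hest₂ : ∀ (n : ℕ) (z : ℂ), z ≠ 0 → α < z.arg → z.arg < β →
      σ ≤ ‖z‖ →
      ‖P₂ z - ∑ k ∈ Finset.range n, p k / z ^ (k + 1)‖ ≤
        M₂ * n.factorial / (a₂ ^ n * ‖z‖ ^ (n + 1))) :
    ∀ z : ℂ, z ≠ 0 → α < z.arg → z.arg < β → P₁ z = P₂ z :=
  watson_uniqueness_order_one_general α β hα hβ hopening p σ hσ P₁ P₂ hP₁ hP₂ M₁ a₁ hM₁ ha₁ hest₁ M₂
    a₂ hM₂ ha₂ hest₂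
end

section
/- Let k > 0, let -π ≤ α < β ≤ π with β - α ≥ π/k, let (p_j) be a sequence of complex numbers, and let σ > 0. Suppose P₁ and P₂ are analytic, single-valued functions on the sector S(α,β) and that for i = 1,2 there exist positive constants M_i, a_i such that for every integer n ≥ 0 and every z ∈ S(α,β) with |z| ≥ σ one has |P_i(z) - Σ_{j=0}^{n-1} p_j z^{-(j+1)}| ≤ M_i (n!)^{1/k} / (k a_i |z|)^{n+1}. Then P₁(z) = P₂(z) for all z ∈ S(α,β). -/
/-!
Subtracting the two estimates at the same truncation order removes the series:
`D = P₁ - P₂` satisfies `‖D z‖ ≤ (M₁ + M₂) n!^{1/k} / (b ‖z‖)^{n+1}` for every `n`, and taking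
`n ≈ (b ‖z‖ / e)^k` (with `n! ≤ nⁿ`) gives `‖D z‖ ≤ M exp (-c ‖z‖^k)`.
Because `β - α ≥ π/k`, a branch of `u ↦ e^{iγ} u^{1/k}` maps a translated right half-plane into
the sector, so `D` becomes a function with `exp (-c ‖w‖)` decay on a closed half-plane.
Phragmén–Lindelöf applied to `f w · exp (L w)` on the sectors `|arg w| ≤ h` with `L cos h = c`
turns this into decay along the positive axis faster than every exponential, which forces the
function to vanish; the identity theorem then spreads `D = 0` over the whole sector.
-/

open Complex Set Filter Topology Asymptotics
open scoped Real

def argSector (α β : ℝ) : Set ℂ := {z | z ≠ 0 ∧ α < z.arg ∧ z.arg < β}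

theorem argSector_eq_image_exp {α β : ℝ} (hα : -π ≤ α) (hβ : β ≤ π) :
    argSector α β = exp '' (im ⁻¹' Ioo α β) := by
  ext z
  constructor
  · rintro ⟨hz, hαz, hzβ⟩
    exact ⟨log z, by simpa [log_im] using ⟨hαz, hzβ⟩, exp_log hz⟩
  · rintro ⟨ζ, ⟨hαζ, hζβ⟩, rfl⟩
    have harg : (exp ζ).arg = ζ.im := by
      rw [← log_im, log_exp (by linarith) (by linarith)]
    exact ⟨exp_ne_zero ζ, harg ▸ hαζ, harg ▸ hζβ⟩

theorem isOpen_argSector {α β : ℝ} (hα : -π ≤ α) (hβ : β ≤ π) : IsOpen (argSector α β) := by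
  rw [argSector_eq_image_exp hα hβ]
  exact isOpenMap_exp _ (isOpen_Ioo.preimage continuous_im)

theorem norm_sub_le_of_gevrey {x y s : ℂ} {M₁ M₂ b₁ b₂ b t F : ℝ} {n : ℕ}
    (hM₁ : 0 ≤ M₁) (hM₂ : 0 ≤ M₂) (hF : 0 ≤ F) (hb : 0 < b) (hb₁ : b ≤ b₁) (hb₂ : b ≤ b₂)
    (ht : 0 < t) (h₁ : ‖x - s‖ ≤ M₁ * F / (b₁ * t) ^ (n + 1))
    (h₂ : ‖y - s‖ ≤ M₂ * F / (b₂ * t) ^ (n + 1)) :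
    ‖x - y‖ ≤ (M₁ + M₂) * F / (b * t) ^ (n + 1) := calc
  ‖x - y‖ ≤ ‖x - s‖ + ‖y - s‖ :=
    (norm_sub_le_norm_sub_add_norm_sub x s y).trans_eq (by rw [norm_sub_rev s y])
  _ ≤ M₁ * F / (b * t) ^ (n + 1) + M₂ * F / (b * t) ^ (n + 1) :=
    add_le_add (h₁.trans (by gcongr)) (h₂.trans (by gcongr))
  _ = (M₁ + M₂) * F / (b * t) ^ (n + 1) := by ring

theorem le_mul_exp_neg_of_forall_le_gevrey {k b M t X : ℝ} (hk : 0 < k) (hb : 0 < b)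
    (hM : 0 ≤ M) (ht : rexp 1 / b ≤ t)
    (hX : ∀ n : ℕ, X ≤ M * (n.factorial : ℝ) ^ (1 / k) / (b * t) ^ (n + 1)) :
    X ≤ M * rexp (-(b / rexp 1) ^ k * t ^ k) := by
  set T := b * t / rexp 1
  have hT : 1 ≤ T := by rwa [le_div_iff₀ (by positivity), one_mul, ← div_le_iff₀' hb]
  have hTk : (b / rexp 1) ^ k * t ^ k = T ^ k := by
    rw [← Real.mul_rpow (by positivity) (by linarith [div_pos (Real.exp_pos 1) hb]),
      div_mul_eq_mul_div]
  set n := ⌊T ^ k⌋₊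
  have hn : (n : ℝ) ≤ T ^ k := Nat.floor_le (by positivity)
  have hfact : (n.factorial : ℝ) ^ (1 / k) ≤ T ^ n := by
    rw [one_div, Real.rpow_inv_le_iff_of_pos (by positivity) (by positivity) hk,
      ← Real.rpow_natCast, ← Real.rpow_mul (by linarith), mul_comm, Real.rpow_mul (by linarith),
      Real.rpow_natCast]
    calc (n.factorial : ℝ) ≤ (n : ℝ) ^ n := by exact_mod_cast Nat.factorial_le_pow n
      _ ≤ (T ^ k) ^ n := by gcongr
  have hbt : b * t = rexp 1 * T := by simp only [T]; field_simp
  calc X ≤ M * (n.factorial : ℝ) ^ (1 / k) / (b * t) ^ (n + 1) := hX n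
    _ ≤ M * T ^ n / (rexp 1 * T) ^ (n + 1) := by rw [hbt]; gcongr
    _ = M * rexp (-(n + 1 : ℝ)) / T := by
      rw [Real.exp_neg, ← Nat.cast_add_one, ← Real.exp_one_pow, mul_pow]; field_simp; ring
    _ ≤ M * rexp (-(n + 1 : ℝ)) := div_le_self (by positivity) hT
    _ ≤ M * rexp (-(b / rexp 1) ^ k * t ^ k) := by
      rw [neg_mul, hTk]; gcongr; linarith [Nat.lt_floor_add_one (T ^ k)]

theorem mul_exp_neg_mul_le {C c r : ℝ} (hC : 0 ≤ C) (hc : 0 ≤ c) (hr : 0 ≤ r) :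
    C * rexp (-c * r) ≤ C :=
  mul_le_of_le_one_right hC (Real.exp_le_one_iff.2 (by nlinarith))

theorem norm_le_mul_exp_neg_of_exp_decay {f : ℂ → ℂ} {c C L x : ℝ} (hc : 0 < c) (hC : 0 ≤ C)
    (hcL : c < L) (hf : DifferentiableOn ℂ f {z | 0 < z.re})
    (hdecay : ∀ z : ℂ, 0 < z.re → ‖f z‖ ≤ C * rexp (-c * ‖z‖)) (hx : 0 < x) :
    ‖f x‖ ≤ C * rexp (-L * x) := by
  have hL : 0 < L := hc.trans hcL
  -- Phragmén–Lindelöf for `f z * exp (L z)` on the sector `|arg z| ≤ h`, read in the logarithmic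
  -- variable: the strip has width `2 h < π`, so order-one growth is admissible, and `L cos h = c`
  -- makes the decay of `f` cancel the growth of `exp (L z)` exactly on the edges.
  set h := Real.arccos (c / L)
  have hh : 0 < h := Real.arccos_pos.2 ((div_lt_one hL).2 hcL)
  have hhπ : h < π / 2 := Real.arccos_lt_pi_div_two.2 (div_pos hc hL)
  have hcos : L * Real.cos h = c := by
    rw [Real.cos_arccos (by linarith [div_pos hc hL]) ((div_le_one hL).2 hcL.le)]
    field_simp
  set g : ℂ → ℂ := fun ζ => f (exp ζ) * exp (L * exp ζ)
  have hnorm : ∀ ζ : ℂ, ‖g ζ‖ = ‖f (exp ζ)‖ * rexp (L * Real.cos ζ.im * rexp ζ.re) := by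
    intro ζ
    rw [norm_mul, norm_exp, re_ofReal_mul, exp_re]
    ring_nf
  have hbound : ∀ z : ℂ, 0 < z.re → ‖f z‖ ≤ C := fun z hz =>
    (hdecay z hz).trans (mul_exp_neg_mul_le hC hc.le (norm_nonneg z))
  have hre : ∀ ζ : ℂ, ζ.im ∈ Icc (-h) h → 0 < (exp ζ).re := fun ζ hζ => by
    rw [exp_re]
    exact mul_pos (Real.exp_pos _)
      (Real.cos_pos_of_mem_Ioo ⟨by linarith [hζ.1], by linarith [hζ.2]⟩)
  have hg : DiffContOnCl ℂ g (im ⁻¹' Ioo (-h) h) := by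
    refine DifferentiableOn.diffContOnCl ?_
    rw [closure_preimage_im, closure_Ioo (by linarith)]
    intro ζ hζ
    have hfζ : DifferentiableAt ℂ f (exp ζ) :=
      hf.differentiableAt ((isOpen_lt continuous_const continuous_re).mem_nhds (hre ζ hζ))
    exact ((hfζ.comp ζ differentiableAt_exp).mul
      ((differentiableAt_exp.const_mul _).cexp)).differentiableWithinAt
  have hgrowth : ∃ c' < π / (h - -h), ∃ B,
      g =O[comap (_root_.abs ∘ re) atTop ⊓ 𝓟 (im ⁻¹' Ioo (-h) h)]
        fun ζ => rexp (B * rexp (c' * |ζ.re|)) := by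
    refine ⟨1, by rw [lt_div_iff₀ (by linarith)]; linarith, L,
      IsBigO.of_bound C (eventually_inf_principal.2 (Eventually.of_forall fun ζ hζ => ?_))⟩
    rw [hnorm, Real.norm_of_nonneg (Real.exp_pos _).le, one_mul]
    refine mul_le_mul (hbound _ (hre ζ ⟨hζ.1.le, hζ.2.le⟩)) (Real.exp_le_exp.2 ?_)
      (Real.exp_pos _).le hC
    calc L * Real.cos ζ.im * rexp ζ.re ≤ L * 1 * rexp |ζ.re| := by
          gcongr
          · exact Real.cos_le_one _
          · exact le_abs_self _
      _ = L * rexp |ζ.re| := by ring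
  have hedge : ∀ ζ : ℂ, |ζ.im| = h → ‖g ζ‖ ≤ C := fun ζ hζ => by
    have hre' := hre ζ (abs_le.1 hζ.le)
    rw [hnorm, ← Real.cos_abs, hζ, hcos]
    calc ‖f (exp ζ)‖ * rexp (c * rexp ζ.re)
        ≤ C * rexp (-c * rexp ζ.re) * rexp (c * rexp ζ.re) := by
          gcongr
          simpa [norm_exp] using hdecay _ hre'
      _ = C := by rw [mul_assoc, ← Real.exp_add]; simp
  have hlog := PhragmenLindelof.horizontal_strip hg hgrowth
    (fun ζ hζ => hedge ζ (by rw [hζ, abs_neg, abs_of_pos hh]))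
    (fun ζ hζ => hedge ζ (by rw [hζ, abs_of_pos hh])) (z := Real.log x)
    (by rw [ofReal_im]; linarith) (by rw [ofReal_im]; linarith)
  rw [hnorm, ← ofReal_exp, Real.exp_log hx] at hlog
  simp only [ofReal_re, ofReal_im, Real.cos_zero, mul_one, Real.exp_log hx] at hlog
  rw [neg_mul, Real.exp_neg, ← div_eq_mul_inv, le_div_iff₀ (Real.exp_pos _)]
  exact hlog

theorem eqOn_zero_of_exp_decay_on_right_half_plane {f : ℂ → ℂ} {c C : ℝ} (hc : 0 < c)
    (hC : 0 ≤ C) (hf : DiffContOnCl ℂ f {z | 0 < z.re})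
    (hdecay : ∀ z : ℂ, 0 ≤ z.re → ‖f z‖ ≤ C * rexp (-c * ‖z‖)) :
    EqOn f 0 {z | 0 ≤ z.re} := by
  have hbound : ∀ z : ℂ, 0 ≤ z.re → ‖f z‖ ≤ C := fun z hz =>
    (hdecay z hz).trans (mul_exp_neg_mul_le hC hc.le (norm_nonneg z))
  refine PhragmenLindelof.eq_zero_on_right_half_plane_of_superexponential_decay hf
    ⟨0, two_pos, 0, IsBigO.of_bound C (eventually_inf_principal.2
      (Eventually.of_forall fun z hz => by simpa using hbound z (le_of_lt hz)))⟩ ?_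
    ⟨C, fun x => hbound _ (by simp)⟩
  refine (superpolynomialDecay_iff_isBigO _ Real.tendsto_exp_atTop).2 fun m => ?_
  refine IsBigO.of_bound C ?_
  filter_upwards [eventually_gt_atTop 0] with x hx
  have hfx := norm_le_mul_exp_neg_of_exp_decay (L := |(m : ℝ)| + c + 1) hc hC
    (by linarith [abs_nonneg (m : ℝ)]) hf.1 (fun z hz => hdecay z hz.le) hx
  rw [norm_norm, Real.norm_of_nonneg (zpow_nonneg (Real.exp_pos x).le m), ← Real.rpow_intCast,
    ← Real.exp_mul]
  refine hfx.trans (mul_le_mul_of_nonneg_left (Real.exp_le_exp.2 ?_) hC)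
  nlinarith [mul_nonneg (by linarith [neg_abs_le (m : ℝ)] : 0 ≤ (m : ℝ) + |(m : ℝ)|) hx.le]

theorem im_add_log_div_mem_Ioo {k α β : ℝ} {u : ℂ} (hk : 0 < k) (hopening : π / k ≤ β - α)
    (hu : 0 < u.re) : (((α + β) / 2 : ℝ) * I + log u / k).im ∈ Ioo α β := by
  have harg : |u.arg / k| < π / k / 2 := by
    rw [abs_div, abs_of_pos hk, div_right_comm, div_lt_div_iff_of_pos_right hk]
    exact abs_arg_lt_pi_div_two_iff.2 (Or.inl hu)
  simp only [add_im, mul_I_im, ofReal_re, div_ofReal_im, log_im, mem_Ioo]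
  constructor <;> linarith [abs_lt.1 harg]

theorem exp_add_log_div_mem_argSector {k α β : ℝ} {u : ℂ} (hk : 0 < k) (hα : -π ≤ α)
    (hβ : β ≤ π) (hopening : π / k ≤ β - α) (hu : 0 < u.re) :
    exp (((α + β) / 2 : ℝ) * I + log u / k) ∈ argSector α β := by
  rw [argSector_eq_image_exp hα hβ]
  exact mem_image_of_mem _ (im_add_log_div_mem_Ioo hk hopening hu)

theorem norm_exp_add_log_div_rpow {k : ℝ} (hk : k ≠ 0) (γ : ℝ) {u : ℂ} (hu : u ≠ 0) :
    ‖exp (γ * I + log u / k)‖ ^ k = ‖u‖ := by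
  rw [norm_exp, ← Real.exp_mul]
  simp [log_re, hk, Real.exp_log (norm_pos_iff.2 hu)]

theorem diffContOnCl_comp_exp_add_log_div {f : ℂ → ℂ} {k α β s : ℝ} (hk : 0 < k)
    (hα : -π ≤ α) (hβ : β ≤ π) (hopening : π / k ≤ β - α)
    (hf : DifferentiableOn ℂ f (argSector α β)) (hs : 0 < s) :
    DiffContOnCl ℂ (fun w => f (exp (((α + β) / 2 : ℝ) * I + log (w + s) / k)))
      {w | 0 < w.re} := by
  refine DifferentiableOn.diffContOnCl fun w hw => DifferentiableAt.differentiableWithinAt ?_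
  rw [closure_setOfPred_lt_re, mem_ofPred_eq] at hw
  have hu : 0 < (w + s).re := by rw [add_re, ofReal_re]; linarith
  have hlog : DifferentiableAt ℂ (fun w : ℂ => log (w + s)) w :=
    (differentiableAt_log (Or.inl hu)).comp (f := fun w : ℂ => w + s) w
      (differentiableAt_id.add_const _)
  exact (hf.differentiableAt ((isOpen_argSector hα hβ).mem_nhds
    (exp_add_log_div_mem_argSector hk hα hβ hopening hu))).comp w
    ((hlog.div_const _).const_add _).cexp

theorem eqOn_zero_of_eq_zero_on_ray {f : ℂ → ℂ} {α β γ r₀ : ℝ} (hα : -π ≤ α) (hβ : β ≤ π)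
    (hf : DifferentiableOn ℂ f (argSector α β)) (hγ : γ ∈ Ioo α β)
    (hray : ∀ r : ℝ, r₀ ≤ r → f (exp (γ * I + r)) = 0) :
    EqOn f 0 (argSector α β) := by
  have hg : AnalyticOnNhd ℂ (f ∘ exp) (im ⁻¹' Ioo α β) := by
    refine (hf.comp differentiable_exp.differentiableOn ?_).analyticOnNhd
      (isOpen_Ioo.preimage continuous_im)
    rw [argSector_eq_image_exp hα hβ]
    exact mapsTo_image _ _
  have hline : Tendsto (fun r : ℝ => (γ * I + r : ℂ)) (𝓝[>] r₀) (𝓝[≠] (γ * I + r₀)) :=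
    tendsto_nhdsWithin_of_tendsto_nhds_of_eventually_within _
      ((continuous_const.add continuous_ofReal).tendsto' _ _ rfl |>.mono_left nhdsWithin_le_nhds)
      (eventually_nhdsWithin_of_forall fun r hr => by simpa using hr.ne')
  have hfreq : ∃ᶠ ξ in 𝓝[≠] (γ * I + r₀ : ℂ), (f ∘ exp) ξ = 0 := hline.frequently
    (Eventually.frequently (eventually_nhdsWithin_of_forall fun r hr => hray r (le_of_lt hr)))
  have hzero := hg.eqOn_zero_of_preconnected_of_frequently_eq_zero
    ((convex_Ioo α β).linear_preimage imLm).isPreconnected (by simpa using hγ) hfreq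
  rw [argSector_eq_image_exp hα hβ]
  rintro _ ⟨ξ, hξ, rfl⟩
  exact hzero hξ

theorem eqOn_zero_of_decay_on_argSector {f : ℂ → ℂ} {k α β A c R : ℝ} (hk : 0 < k)
    (hα : -π ≤ α) (hβ : β ≤ π) (hopening : π / k ≤ β - α)
    (hf : DifferentiableOn ℂ f (argSector α β)) (hA : 0 ≤ A) (hc : 0 < c)
    (hdecay : ∀ z ∈ argSector α β, R ≤ ‖z‖ → ‖f z‖ ≤ A * rexp (-c * ‖z‖ ^ k)) :
    EqOn f 0 (argSector α β) := by
  set γ := (α + β) / 2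
  set ζ : ℂ → ℂ := fun u => γ * I + log u / k
  set s := max 1 R ^ k
  have hs : 0 < s := Real.rpow_pos_of_pos (lt_max_of_lt_left one_pos) k
  set H : ℂ → ℂ := fun w => f (exp (ζ (w + s)))
  have hH : DiffContOnCl ℂ H {w | 0 < w.re} :=
    diffContOnCl_comp_exp_add_log_div hk hα hβ hopening hf hs
  have hH_decay : ∀ w : ℂ, 0 ≤ w.re → ‖H w‖ ≤ A * rexp (c * s) * rexp (-c * ‖w‖) := by
    intro w hw
    have hu : s ≤ (w + s).re := by rw [add_re, ofReal_re]; linarith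
    have hu0 : w + s ≠ 0 := fun h => by rw [h, zero_re] at hu; linarith
    have hR : R ≤ ‖exp (ζ (w + s))‖ := by
      refine (le_max_right 1 R).trans ?_
      rw [← Real.rpow_le_rpow_iff (by positivity) (norm_nonneg _) hk,
        norm_exp_add_log_div_rpow hk.ne' γ hu0]
      exact hu.trans (re_le_norm _)
    have hw' : ‖w‖ ≤ ‖w + s‖ + s := by
      simpa [abs_of_pos hs] using norm_le_norm_add_norm_sub' w (w + s)
    calc ‖H w‖ ≤ A * rexp (-c * ‖exp (ζ (w + s))‖ ^ k) :=
          hdecay _ (exp_add_log_div_mem_argSector hk hα hβ hopening (hs.trans_le hu)) hR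
      _ = A * rexp (-c * ‖w + s‖) := by rw [norm_exp_add_log_div_rpow hk.ne' γ hu0]
      _ ≤ A * rexp (c * s + -c * ‖w‖) := by gcongr; nlinarith
      _ = A * rexp (c * s) * rexp (-c * ‖w‖) := by rw [Real.exp_add, mul_assoc]
  have hH_zero := eqOn_zero_of_exp_decay_on_right_half_plane hc (by positivity) hH hH_decay
  refine eqOn_zero_of_eq_zero_on_ray hα hβ hf (γ := γ) (r₀ := Real.log s / k) ?_ fun r hr => ?_
  · simpa using im_add_log_div_mem_Ioo (u := 1) hk hopening one_pos
  have hsr : s ≤ rexp (k * r) := by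
    rw [← Real.exp_log hs, Real.exp_le_exp, ← div_le_iff₀' hk]
    exact hr
  have hζr : ζ (rexp (k * r)) = γ * I + r := by
    simp only [ζ, ← ofReal_log (Real.exp_pos _).le, Real.log_exp, ofReal_mul]
    rw [mul_div_cancel_left₀ _ (ofReal_ne_zero.2 hk.ne')]
  have hw : 0 ≤ (((rexp (k * r) - s : ℝ)) : ℂ).re := by rw [ofReal_re]; linarith
  have hHr := hH_zero hw
  simp only [H, Pi.zero_apply, ofReal_sub, sub_add_cancel, hζr] at hHr
  exact hHr

theorem watson_uniqueness_order_k_general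
    (k : ℝ) (hk : 0 < k)
    (α β : ℝ) (hα : -Real.pi ≤ α) (hβ : β ≤ Real.pi)
    (hopening : Real.pi / k ≤ β - α)
    (p : ℕ → ℂ) (σ : ℝ)
    (P₁ P₂ : ℂ → ℂ)
    (hP₁ : DifferentiableOn ℂ P₁ {z : ℂ | z ≠ 0 ∧ α < z.arg ∧ z.arg < β})
    (hP₂ : DifferentiableOn ℂ P₂ {z : ℂ | z ≠ 0 ∧ α < z.arg ∧ z.arg < β})
    (M₁ a₁ : ℝ) (hM₁ : 0 < M₁) (ha₁ : 0 < a₁)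
    (hest₁ : ∀ (n : ℕ) (z : ℂ), z ≠ 0 → α < z.arg → z.arg < β →
      σ ≤ ‖z‖ →
      ‖P₁ z - ∑ j ∈ Finset.range n, p j / z ^ (j + 1)‖ ≤
        M₁ * (n.factorial : ℝ) ^ (1 / k) / (k * a₁ * ‖z‖) ^ (n + 1))
    (M₂ a₂ : ℝ) (hM₂ : 0 < M₂) (ha₂ : 0 < a₂)
    (hest₂ : ∀ (n : ℕ) (z : ℂ), z ≠ 0 → α < z.arg → z.arg < β →
      σ ≤ ‖z‖ →
      ‖P₂ z - ∑ j ∈ Finset.range n, p j / z ^ (j + 1)‖ ≤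
        M₂ * (n.factorial : ℝ) ^ (1 / k) / (k * a₂ * ‖z‖) ^ (n + 1)) :
    ∀ z : ℂ, z ≠ 0 → α < z.arg → z.arg < β → P₁ z = P₂ z := by
  set b := k * min a₁ a₂
  have hb : 0 < b := mul_pos hk (lt_min ha₁ ha₂)
  have hdecay : ∀ z ∈ argSector α β, max σ (rexp 1 / b) ≤ ‖z‖ →
      ‖(P₁ - P₂) z‖ ≤ (M₁ + M₂) * rexp (-(b / rexp 1) ^ k * ‖z‖ ^ k) := by
    rintro z ⟨hz, hαz, hzβ⟩ hzR
    have hσz : σ ≤ ‖z‖ := (le_max_left _ _).trans hzR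
    have hbz : rexp 1 / b ≤ ‖z‖ := (le_max_right _ _).trans hzR
    refine le_mul_exp_neg_of_forall_le_gevrey hk hb (by positivity) hbz fun n => ?_
    exact norm_sub_le_of_gevrey hM₁.le hM₂.le (by positivity) hb
      (mul_le_mul_of_nonneg_left (min_le_left _ _) hk.le)
      (mul_le_mul_of_nonneg_left (min_le_right _ _) hk.le)
      ((div_pos (Real.exp_pos 1) hb).trans_le hbz)
      (hest₁ n z hz hαz hzβ hσz) (hest₂ n z hz hαz hzβ hσz)
  have hzero := eqOn_zero_of_decay_on_argSector hk hα hβ hopening (hP₁.sub hP₂)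
    (by positivity) (by positivity) hdecay
  exact fun z hz hαz hzβ => sub_eq_zero.1 (hzero ⟨hz, hαz, hzβ⟩)

/-- **Watson's uniqueness theorem for Gevrey expansions of order `k`.**
Let `k > 0` and `-π ≤ α < β ≤ π` with `β - α ≥ π/k`. If `P₁` and `P₂` are
analytic on the sector `S(α,β) = {z ≠ 0 : α < arg z < β}` and both admit the
Gevrey estimates of order `k` with the same coefficient sequence `p`
(with possibly different constants `Mᵢ, aᵢ`, valid for `|z| ≥ σ`), then
`P₁ = P₂` on `S(α,β)`. -/
theorem watson_uniqueness_order_k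
    (k : ℝ) (hk : 0 < k)
    (α β : ℝ) (hα : -Real.pi ≤ α) (hβ : β ≤ Real.pi) (hαβ : α < β)
    (hopening : Real.pi / k ≤ β - α)
    (p : ℕ → ℂ) (σ : ℝ) (hσ : 0 < σ)
    (P₁ P₂ : ℂ → ℂ)
    (hP₁ : DifferentiableOn ℂ P₁ {z : ℂ | z ≠ 0 ∧ α < z.arg ∧ z.arg < β})
    (hP₂ : DifferentiableOn ℂ P₂ {z : ℂ | z ≠ 0 ∧ α < z.arg ∧ z.arg < β})
    (M₁ a₁ : ℝ) (hM₁ : 0 < M₁) (ha₁ : 0 < a₁)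
    (hest₁ : ∀ (n : ℕ) (z : ℂ), z ≠ 0 → α < z.arg → z.arg < β →
      σ ≤ ‖z‖ →
      ‖P₁ z - ∑ j ∈ Finset.range n, p j / z ^ (j + 1)‖ ≤
        M₁ * (n.factorial : ℝ) ^ (1 / k) / (k * a₁ * ‖z‖) ^ (n + 1))
    (M₂ a₂ : ℝ) (hM₂ : 0 < M₂) (ha₂ : 0 < a₂)
    (hest₂ : ∀ (n : ℕ) (z : ℂ), z ≠ 0 → α < z.arg → z.arg < β →
      σ ≤ ‖z‖ →
      ‖P₂ z - ∑ j ∈ Finset.range n, p j / z ^ (j + 1)‖ ≤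
        M₂ * (n.factorial : ℝ) ^ (1 / k) / (k * a₂ * ‖z‖) ^ (n + 1)) :
    ∀ z : ℂ, z ≠ 0 → α < z.arg → z.arg < β → P₁ z = P₂ z :=
  watson_uniqueness_order_k_general k hk α β hα hβ hopening p σ P₁ P₂ hP₁ hP₂ M₁ a₁ hM₁ ha₁ hest₁ M₂
    a₂ hM₂ ha₂ hest₂
end

section
/- Let P be analytic on the open right half-plane {z ∈ ℂ : Re z > 0}. If there exist constants M > 0 and a > 0 such that |P(z)| ≤ M e^{-a|z|} for all z with Re z > 0, then P(z) = 0 for all z with Re z > 0. -/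
/-!
For `c > 1` let `α = arccos (1 / c) < π / 2`. On the rays `arg z = ± α` the factor
`exp (c a z)` has modulus `exp (a |z|)`, so `P z * exp (c a z)` is bounded by `M` there; it has
exponential type, and the sector between the rays has opening `2α < π`, so Phragmén–Lindelöf
bounds it by `M` inside as well. Hence `|P x| ≤ M e^{-c a x}` for every `c > 1` and `x > 0`,
i.e. `P` vanishes on the positive reals, and so everywhere by the identity theorem.
-/

open Set Filter Complex Topology
open scoped Real

namespace PhragmenLindelof

variable {E : Type*} [NormedAddCommGroup E] [NormedSpace ℂ E]

/-- The closed sector `|arg z| ≤ α` is parametrized as `exp w` with `|Im w| ≤ α`. -/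
theorem sector_of_exponential_type {f : ℂ → E} {α A B C : ℝ} (hα : α < π / 2)
    (hd : ∀ w : ℂ, |w.im| ≤ α → DifferentiableAt ℂ f (exp w))
    (hgrowth : ∀ w : ℂ, |w.im| ≤ α → ‖f (exp w)‖ ≤ A * Real.exp (B * ‖exp w‖))
    (hbdry : ∀ w : ℂ, |w.im| = α → ‖f (exp w)‖ ≤ C) {w : ℂ} (hw : |w.im| ≤ α) :
    ‖f (exp w)‖ ≤ C := by
  rcases hw.eq_or_lt with hw_eq | hw_lt
  · exact hbdry w hw_eq
  have hα0 : 0 < α := (abs_nonneg _).trans_lt hw_lt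
  have hstrip : ∀ w ∈ closure (im ⁻¹' Ioo (-α) α), |w.im| ≤ α := fun w hw ↦
    abs_le.2 <| closure_minimal (preimage_mono Ioo_subset_Icc_self)
      (isClosed_Icc.preimage continuous_im) hw
  refine horizontal_strip (f := f ∘ exp) ?_ ⟨1, ?_, |B|, ?_⟩
    (fun w hw ↦ hbdry w (by rw [hw, abs_neg, abs_of_pos hα0]))
    (fun w hw ↦ hbdry w (by rw [hw, abs_of_pos hα0])) (abs_le.1 hw).1 (abs_le.1 hw).2
  · exact DifferentiableOn.diffContOnCl fun w hw ↦
      ((hd w (hstrip w hw)).comp w differentiableAt_exp).differentiableWithinAt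
  · rw [sub_neg_eq_add, ← two_mul, lt_div_iff₀ (by positivity)]
    linarith
  · refine Asymptotics.IsBigO.of_bound |A| (eventually_inf_principal.2 (.of_forall fun w hw ↦ ?_))
    have hexp : B * ‖exp w‖ ≤ |B| * Real.exp (1 * |w.re|) := by
      rw [norm_exp, one_mul]
      exact mul_le_mul (le_abs_self B) (Real.exp_le_exp.2 (le_abs_self _)) (Real.exp_pos _).le
        (abs_nonneg B)
    calc ‖(f ∘ exp) w‖ ≤ A * Real.exp (B * ‖exp w‖) := hgrowth w (hstrip w (subset_closure hw))
      _ ≤ |A| * Real.exp (B * ‖exp w‖) := by gcongr; exact le_abs_self A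
      _ ≤ |A| * ‖Real.exp (|B| * Real.exp (1 * |w.re|))‖ := by
        rw [Real.norm_eq_abs, Real.abs_exp]; gcongr

end PhragmenLindelof

theorem Complex.exp_re_pos_of_abs_im_lt {w : ℂ} (hw : |w.im| < π / 2) : 0 < (exp w).re := by
  rw [exp_re]
  exact mul_pos (Real.exp_pos _) (Real.cos_pos_of_mem_Ioo (abs_lt.1 hw))

theorem norm_le_mul_exp_of_exp_decay_on_rightHalfPlane {P : ℂ → ℂ} {M a : ℝ}
    (hP : DifferentiableOn ℂ P {z | 0 < z.re}) (ha : 0 ≤ a)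
    (hbound : ∀ z : ℂ, 0 < z.re → ‖P z‖ ≤ M * Real.exp (-a * ‖z‖)) {c : ℝ} (hc : 1 < c)
    {x : ℝ} (hx : 0 < x) : ‖P x‖ ≤ M * Real.exp (-(c * a * x)) := by
  set α := Real.arccos c⁻¹
  have hα : α < π / 2 := Real.arccos_lt_pi_div_two.2 (by positivity)
  have hcos : Real.cos α = c⁻¹ := Real.cos_arccos (by linarith [inv_pos.2 (zero_lt_one.trans hc)])
    (inv_le_one_of_one_le₀ hc.le)
  have hre : ∀ w : ℂ, |w.im| ≤ α → 0 < (exp w).re := fun w hw ↦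
    exp_re_pos_of_abs_im_lt (hw.trans_lt hα)
  set f : ℂ → ℂ := fun z ↦ P z * exp (↑(c * a) * z)
  have hf : ∀ z, ‖f z‖ = ‖P z‖ * Real.exp (c * a * z.re) := fun z ↦ by
    simp only [f, norm_mul, norm_exp, re_ofReal_mul]
  have key : ‖f (exp (Real.log x))‖ ≤ M := by
    refine PhragmenLindelof.sector_of_exponential_type (A := M) (B := (c - 1) * a) hα
      (fun w hw ↦ ?_) (fun w hw ↦ ?_) (fun w hw ↦ ?_) (by simpa using Real.arccos_nonneg _)
    · exact (hP.differentiableAt ((isOpen_lt continuous_const continuous_re).mem_nhds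
        (hre w hw))).mul (differentiableAt_exp.comp _ (differentiableAt_id.const_mul _))
    · have hPw := hbound _ (hre w hw)
      rw [hf]
      calc ‖P (exp w)‖ * Real.exp (c * a * (exp w).re)
          ≤ M * Real.exp (-a * ‖exp w‖) * Real.exp (c * a * ‖exp w‖) := by
            gcongr
            · exact (norm_nonneg _).trans hPw
            · exact re_le_norm _
        _ = M * Real.exp ((c - 1) * a * ‖exp w‖) := by
            rw [mul_assoc, ← Real.exp_add]; ring_nf
    · have hPw := hbound _ (hre w hw.le)
      have hexp_re : (exp w).re = ‖exp w‖ * c⁻¹ := by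
        rw [exp_re, norm_exp, ← Real.cos_abs, hw, hcos]
      rw [hf, hexp_re, show c * a * (‖exp w‖ * c⁻¹) = a * ‖exp w‖ by field_simp]
      calc ‖P (exp w)‖ * Real.exp (a * ‖exp w‖)
          ≤ M * Real.exp (-a * ‖exp w‖) * Real.exp (a * ‖exp w‖) := by gcongr
        _ = M := by rw [mul_assoc, ← Real.exp_add]; simp
  rw [← ofReal_exp, Real.exp_log hx, hf, ofReal_re] at key
  rwa [Real.exp_neg, ← div_eq_mul_inv, le_div_iff₀ (Real.exp_pos _)]

theorem AnalyticOnNhd.eqOn_zero_of_ofReal_eq_zero {f : ℂ → ℂ} {U : Set ℂ}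
    (hf : AnalyticOnNhd ℂ f U) (hUo : IsOpen U) (hU : IsPreconnected U) {x₀ : ℝ}
    (hx₀ : (x₀ : ℂ) ∈ U) (h : ∀ x : ℝ, (x : ℂ) ∈ U → f x = 0) : EqOn f 0 U := by
  refine hf.eqOn_zero_of_preconnected_of_frequently_eq_zero hU hx₀ ?_
  have hreal : Tendsto ((↑) : ℝ → ℂ) (𝓝[≠] x₀) (𝓝[≠] (x₀ : ℂ)) :=
    continuous_ofReal.continuousWithinAt.tendsto_nhdsWithin fun x hx ↦ ofReal_injective.ne hx
  have hmem : ∀ᶠ x : ℝ in 𝓝[≠] x₀, (x : ℂ) ∈ U :=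
    nhdsWithin_le_nhds (continuous_ofReal.continuousAt.preimage_mem_nhds (hUo.mem_nhds hx₀))
  exact hreal.frequently (hmem.mono h).frequently

theorem exp_decay_on_right_halfPlane_eq_zero_general
    (P : ℂ → ℂ)
    (hP : DifferentiableOn ℂ P {z : ℂ | 0 < z.re})
    (M a : ℝ) (ha : 0 < a)
    (hbound : ∀ z : ℂ, 0 < z.re →
      ‖P z‖ ≤ M * Real.exp (-a * ‖z‖)) :
    ∀ z : ℂ, 0 < z.re → P z = 0 := by
  have hopen : IsOpen {z : ℂ | 0 < z.re} := isOpen_lt continuous_const continuous_re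
  have hreal : ∀ x : ℝ, (x : ℂ) ∈ {z : ℂ | 0 < z.re} → P x = 0 := fun x hx ↦ by
    have hx : 0 < x := by simpa using hx
    have hlim : Tendsto (fun c ↦ M * Real.exp (-(c * a * x))) atTop (𝓝 (M * 0)) :=
      (Real.tendsto_exp_neg_atTop_nhds_zero.comp
        ((tendsto_id.atTop_mul_const ha).atTop_mul_const hx)).const_mul M
    refine norm_le_zero_iff.1 (ge_of_tendsto (by simpa using hlim) ?_)
    filter_upwards [eventually_gt_atTop 1] with c hc
    exact norm_le_mul_exp_of_exp_decay_on_rightHalfPlane hP ha.le hbound hc hx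
  exact fun z hz ↦ (hP.analyticOnNhd hopen).eqOn_zero_of_ofReal_eq_zero hopen
    (convex_halfSpace_re_gt 0).isPreconnected (x₀ := 1) (by simp) hreal hz

/-- **Lemma 2.** Let `P` be analytic on the open right half-plane.
If `|P(z)| ≤ M e^{-a|z|}` for all `z` with `Re z > 0`, where `M, a > 0`,
then `P ≡ 0` on the right half-plane. -/
theorem exp_decay_on_right_halfPlane_eq_zero
    (P : ℂ → ℂ)
    (hP : DifferentiableOn ℂ P {z : ℂ | 0 < z.re})
    (M a : ℝ) (hM : 0 < M) (ha : 0 < a)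
    (hbound : ∀ z : ℂ, 0 < z.re →
      ‖P z‖ ≤ M * Real.exp (-a * ‖z‖)) :
    ∀ z : ℂ, 0 < z.re → P z = 0 :=
  exp_decay_on_right_halfPlane_eq_zero_general P hP M a ha hbound
end

section
/- Let P be analytic on the open right half-plane {z ∈ ℂ : Re z > 0}, continuous on the closed right half-plane, and suppose |P(z)| ≤ M e^{-a|z|} for all z with Re z ≥ 0, where M, a > 0. Then for every complex number t with |Im t| < a, the (absolutely convergent) integral F(t) = (1/(2π)) ∫_{-∞}^{∞} P(iy) e^{ity} dy equals 0. -/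
open Complex Set Filter Asymptotics MeasureTheory
open scoped Real

/-! For `ε = 2a/π`, the function `f z = exp (-ε (z + 1) log (z + 1)) * P z` is bounded by `M` on the
closed right half-plane: since `|arg (z + 1)| ≤ π/2` there, the damping factor grows at most like
`exp (a ‖z‖)`, which the decay of `P` cancels. Along the positive reals it decays like
`exp (-ε x log x)`, faster than every exponential. By the Phragmén–Lindelöf principle `f`, hence `P`,
vanishes on the closed half-plane, so the integrand vanishes identically. -/

theorem Complex.neg_pi_div_two_mul_abs_im_le_re_mul_log {w : ℂ} (hw : 1 ≤ w.re) :
    -(π / 2 * |w.im|) ≤ (w * log w).re := by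
  have hlog : 0 ≤ w.re * Real.log ‖w‖ :=
    mul_nonneg (by linarith) (Real.log_nonneg (hw.trans (re_le_norm w)))
  have harg : w.im * arg w ≤ |w.im| * (π / 2) :=
    (le_abs_self _).trans <| by
      rw [abs_mul]; gcongr; exact abs_arg_le_pi_div_two_iff.2 (by linarith)
  rw [mul_re, log_re, log_im]
  linarith

-- The shift by `1` keeps `log` holomorphic on a neighbourhood of the closed half-plane.
noncomputable def halfPlaneDamping (ε : ℝ) (z : ℂ) : ℂ :=
  exp (-ε * ((z + 1) * log (z + 1)))

namespace halfPlaneDamping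

variable {ε : ℝ}

theorem differentiableOn : DifferentiableOn ℂ (halfPlaneDamping ε) {z : ℂ | 0 ≤ z.re} := by
  intro z hz
  have hslit : z + 1 ∈ slitPlane := Or.inl (by simp only [add_re, one_re]; linarith [hz.out])
  exact ((((differentiableAt_id.add_const 1).mul
    ((differentiableAt_id.add_const 1).clog hslit)).const_mul _).cexp).differentiableWithinAt

theorem norm_le (hε : 0 ≤ ε) {z : ℂ} (hz : 0 ≤ z.re) :
    ‖halfPlaneDamping ε z‖ ≤ Real.exp (ε * (π / 2) * ‖z‖) := by
  have key := neg_pi_div_two_mul_abs_im_le_re_mul_log (w := z + 1) (by simp; linarith)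
  have him : |(z + 1).im| ≤ ‖z‖ := by simpa using abs_im_le_norm z
  rw [halfPlaneDamping, norm_exp, Real.exp_le_exp, ← ofReal_neg, re_ofReal_mul]
  calc -ε * ((z + 1) * log (z + 1)).re ≤ ε * (π / 2 * |(z + 1).im|) := by nlinarith
    _ ≤ ε * (π / 2) * ‖z‖ := by rw [← mul_assoc]; gcongr

theorem norm_ofReal {x : ℝ} (hx : 0 ≤ x) :
    ‖halfPlaneDamping ε x‖ = Real.exp (-ε * ((x + 1) * Real.log (x + 1))) := by
  rw [halfPlaneDamping, norm_exp, ← ofReal_one, ← ofReal_add, ← ofReal_log (by linarith),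
    ← ofReal_mul, ← ofReal_neg, ← ofReal_mul, ofReal_re]

end halfPlaneDamping

theorem superpolynomialDecay_exp_neg_mul_mul_log_add_one {ε : ℝ} (hε : 0 < ε) :
    SuperpolynomialDecay atTop Real.exp
      fun x => Real.exp (-ε * ((x + 1) * Real.log (x + 1))) := by
  intro n
  have hexp : ∀ x : ℝ, Real.exp x ^ n * Real.exp (-ε * ((x + 1) * Real.log (x + 1))) =
      Real.exp ((x + 1) * (n - ε * Real.log (x + 1)) - n) := by
    intro x
    rw [← Real.exp_nat_mul, ← Real.exp_add]
    ring_nf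
  simp only [hexp]
  have hshift : Tendsto (fun x : ℝ => x + 1) atTop atTop :=
    tendsto_atTop_add_const_right _ 1 tendsto_id
  refine Real.tendsto_exp_atBot.comp (tendsto_atBot_add_const_right _ _ ?_)
  refine hshift.atTop_mul_atBot₀ (tendsto_atBot_add_const_left _ _ ?_)
  exact tendsto_neg_atTop_atBot.comp ((Real.tendsto_log_atTop.comp hshift).const_mul_atTop hε)

theorem eqOn_zero_of_norm_le_exp_neg_mul_norm {P : ℂ → ℂ}
    (hP : DifferentiableOn ℂ P {z : ℂ | 0 < z.re}) (hPc : ContinuousOn P {z : ℂ | 0 ≤ z.re})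
    {M a : ℝ} (ha : 0 < a) (hbound : ∀ z : ℂ, 0 ≤ z.re → ‖P z‖ ≤ M * Real.exp (-a * ‖z‖)) :
    EqOn P 0 {z : ℂ | 0 ≤ z.re} := by
  set ε := 2 * a / π with hε_def
  have hε : 0 < ε := by positivity
  set f := halfPlaneDamping ε * P with hf
  have hf_le : ∀ z : ℂ, 0 ≤ z.re → ‖f z‖ ≤ M := fun z hz => by
    have hdamp := halfPlaneDamping.norm_le hε.le hz
    rw [show ε * (π / 2) = a by rw [hε_def]; field_simp] at hdamp
    calc ‖f z‖ ≤ Real.exp (a * ‖z‖) * (M * Real.exp (-a * ‖z‖)) := by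
          rw [hf, Pi.mul_apply, norm_mul]
          exact mul_le_mul hdamp (hbound z hz) (norm_nonneg _) (Real.exp_pos _).le
      _ = M := by rw [mul_left_comm, ← Real.exp_add]; simp
  have hM : 0 ≤ M := (norm_nonneg _).trans (hf_le 0 le_rfl)
  have hd : DiffContOnCl ℂ f {z : ℂ | 0 < z.re} := by
    have hsub : {z : ℂ | 0 < z.re} ⊆ {z : ℂ | 0 ≤ z.re} := fun _ hz => le_of_lt hz.out
    refine ⟨(halfPlaneDamping.differentiableOn.mono hsub).mul hP, ?_⟩
    rw [closure_setOfPred_lt_re]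
    exact halfPlaneDamping.differentiableOn.continuousOn.mul hPc
  have hexp : ∃ c < (2 : ℝ), ∃ B,
      f =O[Bornology.cobounded ℂ ⊓ 𝓟 {z : ℂ | 0 < z.re}] fun z => Real.exp (B * ‖z‖ ^ c) :=
    ⟨0, two_pos, 0, IsBigO.of_bound M <| eventually_inf_principal.2 <|
      .of_forall fun z hz => by simpa using hf_le z (le_of_lt hz)⟩
  have hre : SuperpolynomialDecay atTop Real.exp fun x : ℝ => ‖f x‖ := by
    refine SuperpolynomialDecay.trans_eventuallyLE (.of_forall fun x => (Real.exp_pos x).le)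
      (superpolynomialDecay_zero _ _)
      ((superpolynomialDecay_exp_neg_mul_mul_log_add_one hε).const_mul M)
      (.of_forall fun x => norm_nonneg _) ?_
    filter_upwards [eventually_ge_atTop 0] with x hx
    have hPx : ‖P x‖ ≤ M := (hbound x (by simpa using hx)).trans <|
      mul_le_of_le_one_right hM (Real.exp_le_one_iff.2 (by nlinarith [norm_nonneg (x : ℂ)]))
    rw [hf, Pi.mul_apply, norm_mul, halfPlaneDamping.norm_ofReal hx, mul_comm M]
    exact mul_le_mul_of_nonneg_left hPx (Real.exp_pos _).le
  have him : ∃ C, ∀ x : ℝ, ‖f (x * I)‖ ≤ C := ⟨M, fun x => hf_le _ (by simp)⟩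
  intro z hz
  simpa [f, halfPlaneDamping, exp_ne_zero] using
    PhragmenLindelof.eq_zero_on_right_half_plane_of_superexponential_decay hd hexp hre him hz

theorem fourierLaplace_transform_boundary_eq_zero_general
    (P : ℂ → ℂ)
    (hP : DifferentiableOn ℂ P {z : ℂ | 0 < z.re})
    (hPc : ContinuousOn P {z : ℂ | 0 ≤ z.re})
    (M a : ℝ) (ha : 0 < a)
    (hbound : ∀ z : ℂ, 0 ≤ z.re →
      ‖P z‖ ≤ M * Real.exp (-a * ‖z‖))
    (t : ℂ) :
    MeasureTheory.Integrable
      (fun y : ℝ => P (Complex.I * y) * Complex.exp (Complex.I * t * y)) ∧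
    (1 / (2 * Real.pi) : ℂ) *
      ∫ y : ℝ, P (Complex.I * y) * Complex.exp (Complex.I * t * y) = 0 := by
  have hzero : (fun y : ℝ => P (I * y) * exp (I * t * y)) = 0 := funext fun y => by
    rw [eqOn_zero_of_norm_le_exp_neg_mul_norm hP hPc ha hbound (by simp : 0 ≤ (I * y).re),
      Pi.zero_apply, zero_mul, Pi.zero_apply]
  rw [hzero]
  exact ⟨integrable_zero _ _ _, by simp⟩

/-- **Lemma 2, third proof (vanishing of the Fourier–Laplace transform).**
Let `P` be analytic on the open right half-plane, continuous on the closed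
right half-plane, and satisfy `|P(z)| ≤ M e^{-a|z|}` for `Re z ≥ 0`. Then for
every complex `t` with `|Im t| < a`, the absolutely convergent integral
`F(t) = (1/(2π)) ∫_{-∞}^{∞} P(iy) e^{ity} dy` vanishes. -/
theorem fourierLaplace_transform_boundary_eq_zero
    (P : ℂ → ℂ)
    (hP : DifferentiableOn ℂ P {z : ℂ | 0 < z.re})
    (hPc : ContinuousOn P {z : ℂ | 0 ≤ z.re})
    (M a : ℝ) (hM : 0 < M) (ha : 0 < a)
    (hbound : ∀ z : ℂ, 0 ≤ z.re →
      ‖P z‖ ≤ M * Real.exp (-a * ‖z‖))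
    (t : ℂ) (ht : |t.im| < a) :
    MeasureTheory.Integrable
      (fun y : ℝ => P (Complex.I * y) * Complex.exp (Complex.I * t * y)) ∧
    (1 / (2 * Real.pi) : ℂ) *
      ∫ y : ℝ, P (Complex.I * y) * Complex.exp (Complex.I * t * y) = 0 :=
  fourierLaplace_transform_boundary_eq_zero_general P hP hPc M a ha hbound t
end

section
/- Let 0 < δ < π/2, let φ be analytic on the sector S(-π/2+δ, π/2-δ) with |φ(z)| ≤ M for all z in this sector, and define P(z) = φ(z) e^{-z} / z. Then for every integer n ≥ 0 and every z ∈ S(-π/2+δ, π/2-δ), |P(z)| ≤ M · n! / ((sin δ)^n |z|^{n+1}). In particular, P admits the Gevrey estimates of order 1 with all coefficients p_k = 0, constant M, and a = sin δ on the sector S(-π/2+δ, π/2-δ). -/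
/-! On the sector `|arg z| < π/2 - δ` one has `Re z ≥ sin δ · |z|`, so
`|e^{-z}| = e^{-Re z} ≤ n! / (Re z)^n ≤ n! / (sin δ · |z|)^n`, the middle inequality being
`x^n / n! ≤ e^x` (one term of the exponential series). Multiplying by `|φ(z)| / |z| ≤ M / |z|`
gives the estimate for every `n`. -/

open Real

lemma Real.sin_le_cos_of_abs_le {δ θ : ℝ} (hδ : -(π / 2) ≤ δ) (hθ : |θ| ≤ π / 2 - δ) :
    sin δ ≤ cos θ := by
  rw [← cos_pi_div_two_sub, ← cos_abs θ]
  exact cos_le_cos_of_nonneg_of_le_pi (abs_nonneg θ) (by linarith) hθ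

lemma Complex.sin_mul_norm_le_re {δ : ℝ} {z : ℂ} (hδ : -(π / 2) ≤ δ)
    (hz : |z.arg| ≤ π / 2 - δ) : Real.sin δ * ‖z‖ ≤ z.re := by
  rw [← Complex.norm_mul_cos_arg, mul_comm]
  exact mul_le_mul_of_nonneg_left (sin_le_cos_of_abs_le hδ hz) (norm_nonneg z)

lemma Real.pow_mul_exp_neg_le_factorial {x : ℝ} (hx : 0 ≤ x) (n : ℕ) :
    x ^ n * exp (-x) ≤ n.factorial := by
  rw [exp_neg, ← div_eq_mul_inv, div_le_iff₀ (exp_pos x), ← div_le_iff₀' (by positivity)]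
  exact pow_div_factorial_le_exp x hx n

lemma Complex.norm_mul_exp_neg_div_le {a M : ℝ} {w z : ℂ} (ha : 0 < a) (hre : a * ‖z‖ ≤ z.re)
    (hw : ‖w‖ ≤ M) (n : ℕ) :
    ‖w * exp (-z) / z‖ ≤ M * n.factorial / (a ^ n * ‖z‖ ^ (n + 1)) := by
  rcases eq_or_ne z 0 with rfl | hz
  · simp
  have hz' : 0 < ‖z‖ := norm_pos_iff.mpr hz
  have hM : 0 ≤ M := (norm_nonneg w).trans hw
  have hexp : (a * ‖z‖) ^ n * Real.exp (-z.re) ≤ n.factorial :=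
    calc (a * ‖z‖) ^ n * Real.exp (-z.re)
        ≤ z.re ^ n * Real.exp (-z.re) := by gcongr
      _ ≤ n.factorial := Real.pow_mul_exp_neg_le_factorial ((mul_nonneg ha.le hz'.le).trans hre) n
  rw [norm_div, norm_mul, norm_exp, neg_re, div_le_div_iff₀ hz' (by positivity)]
  calc ‖w‖ * Real.exp (-z.re) * (a ^ n * ‖z‖ ^ (n + 1))
      = ‖w‖ * ((a * ‖z‖) ^ n * Real.exp (-z.re)) * ‖z‖ := by ring
    _ ≤ M * n.factorial * ‖z‖ := by gcongr

theorem gevrey_estimates_of_exp_times_bounded_general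
    (δ : ℝ) (hδ0 : 0 < δ)
    (M : ℝ)
    (φ : ℂ → ℂ)
    (hφM : ∀ z : ℂ, z ≠ 0 → |z.arg| < Real.pi / 2 - δ → ‖φ z‖ ≤ M)
    (P : ℂ → ℂ) (hP : ∀ z : ℂ, P z = φ z * Complex.exp (-z) / z) :
    ∀ (n : ℕ) (z : ℂ), z ≠ 0 → |z.arg| < Real.pi / 2 - δ →
      ‖P z‖ ≤
        M * n.factorial / (Real.sin δ ^ n * ‖z‖ ^ (n + 1)) := by
  intro n z hz harg
  have hδ1 : δ < π / 2 := by linarith [abs_nonneg z.arg]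
  have hsin : 0 < sin δ := sin_pos_of_pos_of_lt_pi hδ0 (by linarith [pi_pos])
  rw [hP]
  exact Complex.norm_mul_exp_neg_div_le hsin
    (Complex.sin_mul_norm_le_re (by linarith) harg.le) (hφM z hz harg) n

/-- **Non-uniqueness example for sectors of opening less than `π`.**
Let `0 < δ < π/2`, let `φ` be analytic and bounded by `M` on the sector
`S(-π/2+δ, π/2-δ)`, and set `P(z) = φ(z) e^{-z} / z`. Then `P` satisfies the
Gevrey estimates of order 1 with all coefficients zero, constant `M` and
`a = sin δ`: for every `n ≥ 0` and every `z` in the sector,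
`|P(z)| ≤ M n! / ((sin δ)^n |z|^{n+1})`. -/
theorem gevrey_estimates_of_exp_times_bounded
    (δ : ℝ) (hδ0 : 0 < δ) (hδ1 : δ < Real.pi / 2)
    (M : ℝ) (hM : 0 < M)
    (φ : ℂ → ℂ)
    (hφ : DifferentiableOn ℂ φ {z : ℂ | z ≠ 0 ∧ |z.arg| < Real.pi / 2 - δ})
    (hφM : ∀ z : ℂ, z ≠ 0 → |z.arg| < Real.pi / 2 - δ → ‖φ z‖ ≤ M)
    (P : ℂ → ℂ) (hP : ∀ z : ℂ, P z = φ z * Complex.exp (-z) / z) :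
    ∀ (n : ℕ) (z : ℂ), z ≠ 0 → |z.arg| < Real.pi / 2 - δ →
      ‖P z‖ ≤
        M * n.factorial / (Real.sin δ ^ n * ‖z‖ ^ (n + 1)) :=
  gevrey_estimates_of_exp_times_bounded_general δ hδ0 M φ hφM P hP
end

section
/- Let M > 0, a > 0, and let z be a complex number with |z| > 1/a. If w is a complex number satisfying |w| ≤ 2M · n! / (a^n |z|^{n+1}) for every integer n ≥ 0, then |w| ≤ 4M√(2π) · a · e^{-a|z|}. -/
/-!
With `t = a‖z‖ > 1`, the `n`-th estimate reads `‖w‖ ≤ 2Ma · n!/t^(n+1)`, so it suffices to find one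
`n` with `n! eᵗ ≤ 2√(2π) t^(n+1)`. For `t ≥ 3` take `n = ⌊t⌋`: the upper Stirling bound
`n! ≤ e√n (n/e)ⁿ` and `t - n < 1` give `n! eᵗ ≤ e²√t tⁿ`, and `e² ≤ 2√(2πt)` once `t ≥ 3`.
For `1 ≤ t ≤ 3` take `n = 1`: convexity of `exp` gives `eᵗ ≤ e t²` there.
-/

open Real Nat

/-- The Stirling sequence decreases from its value `e/√2` at `n = 1`. -/
theorem factorial_le_exp_one_mul_sqrt_mul_pow {n : ℕ} (hn : n ≠ 0) :
    (n ! : ℝ) ≤ exp 1 * √n * (n / exp 1) ^ n := by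
  obtain ⟨m, rfl⟩ := Nat.exists_eq_succ_of_ne_zero hn
  have hseq : Stirling.stirlingSeq (m + 1) ≤ exp 1 / √2 :=
    Stirling.stirlingSeq_one ▸ Stirling.stirlingSeq'_antitone (Nat.zero_le m)
  rw [Stirling.stirlingSeq, div_le_iff₀ (by positivity)] at hseq
  rw [sqrt_mul zero_le_two] at hseq
  calc ((m + 1) ! : ℝ) ≤ exp 1 / √2 * (√2 * √(↑(m + 1) : ℝ) * (↑(m + 1) / exp 1) ^ (m + 1)) := by
        exact_mod_cast hseq
    _ = _ := by field_simp

theorem floor_factorial_mul_exp_le {t : ℝ} (ht : 1 ≤ t) :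
    (⌊t⌋₊ ! : ℝ) * exp t ≤ exp 2 * √t * t ^ ⌊t⌋₊ := by
  set n := ⌊t⌋₊
  have hn : n ≠ 0 := (Nat.floor_pos.mpr ht).ne'
  have hnt : (n : ℝ) ≤ t := Nat.floor_le (by linarith)
  have htn : t - n ≤ 1 := by linarith [Nat.lt_floor_add_one t]
  calc (n ! : ℝ) * exp t ≤ exp 1 * √n * (n / exp 1) ^ n * exp t := by
        gcongr; exact factorial_le_exp_one_mul_sqrt_mul_pow hn
    _ = exp 1 * √n * n ^ n * exp (t - n) := by
        rw [div_pow, exp_one_pow, exp_sub]; ring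
    _ ≤ exp 1 * √t * t ^ n * exp 1 := by gcongr
    _ = exp 2 * √t * t ^ n := by rw [show (2 : ℝ) = 1 + 1 by norm_num, exp_add]; ring

theorem exp_two_le_two_mul_sqrt_two_pi_mul_sqrt {t : ℝ} (ht : 3 ≤ t) :
    exp 2 ≤ 2 * √(2 * π) * √t := by
  have he : exp 2 ≤ 7.4 := by
    rw [show (2 : ℝ) = 1 + 1 by norm_num, exp_add]
    nlinarith [exp_one_lt_d9, exp_pos 1]
  have hsqrt : 7.4 ≤ √(8 * π * t) := by
    rw [le_sqrt (by norm_num) (by positivity)]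
    nlinarith [pi_gt_three]
  calc exp 2 ≤ √(8 * π * t) := he.trans hsqrt
    _ = 2 * √(2 * π) * √t := by
      rw [show 8 * π * t = (2 * √(2 * π) * √t) ^ 2 by
        rw [mul_pow, mul_pow, sq_sqrt (by positivity), sq_sqrt (by linarith)]; ring]
      exact sqrt_sq (by positivity)

theorem exp_le_one_add_two_mul {s : ℝ} (h0 : 0 ≤ s) (h1 : s ≤ 1) : exp s ≤ 1 + 2 * s := by
  have hsecant := convexOn_exp.2 (Set.mem_univ 0) (Set.mem_univ 1) (sub_nonneg.2 h1) h0
    (sub_add_cancel 1 s)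
  simp only [smul_eq_mul, mul_zero, mul_one, zero_add, exp_zero] at hsecant
  nlinarith [exp_one_lt_three]

theorem exp_le_exp_one_mul_sq {t : ℝ} (h1 : 1 ≤ t) (h3 : t ≤ 3) : exp t ≤ exp 1 * t ^ 2 := by
  have hhalf : exp ((t - 1) / 2) ≤ t := by
    linarith [exp_le_one_add_two_mul (s := (t - 1) / 2) (by linarith) (by linarith)]
  calc exp t = exp 1 * exp ((t - 1) / 2) ^ 2 := by
        rw [← exp_nat_mul, ← exp_add]; ring_nf
    _ ≤ exp 1 * t ^ 2 := by gcongr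

theorem exists_factorial_mul_exp_le {t : ℝ} (ht : 1 ≤ t) :
    ∃ n : ℕ, (n ! : ℝ) * exp t ≤ 2 * √(2 * π) * t ^ (n + 1) := by
  rcases le_total t 3 with h3 | h3
  · have hS : 2.5 ≤ √(2 * π) := by
      rw [le_sqrt (by norm_num) (by positivity)]; nlinarith [pi_gt_d2]
    refine ⟨1, ?_⟩
    calc ((1 : ℕ) ! : ℝ) * exp t ≤ exp 1 * t ^ 2 := by simpa using exp_le_exp_one_mul_sq ht h3
      _ ≤ 2 * √(2 * π) * t ^ (1 + 1) := by gcongr; linarith [exp_one_lt_three]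
  · refine ⟨⌊t⌋₊, (floor_factorial_mul_exp_le ht).trans ?_⟩
    calc exp 2 * √t * t ^ ⌊t⌋₊ ≤ 2 * √(2 * π) * √t * √t * t ^ ⌊t⌋₊ := by
          gcongr; exact exp_two_le_two_mul_sqrt_two_pi_mul_sqrt h3
      _ = 2 * √(2 * π) * (√t * √t) * t ^ ⌊t⌋₊ := by ring
      _ = 2 * √(2 * π) * t ^ (⌊t⌋₊ + 1) := by rw [mul_self_sqrt (by linarith)]; ring

theorem factorial_div_pow_le_of_factorial_mul_exp_le {a r C : ℝ} {n : ℕ} (ha : 0 < a) (hr : 0 < r)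
    (h : (n ! : ℝ) * exp (a * r) ≤ C * (a * r) ^ (n + 1)) :
    (n ! : ℝ) / (a ^ n * r ^ (n + 1)) ≤ C * a * exp (-(a * r)) := by
  have hpow : a ^ n * r ^ (n + 1) * a = (a * r) ^ (n + 1) := by ring
  rw [div_le_iff₀ (by positivity), exp_neg, ← mul_le_mul_iff_left₀ (exp_pos (a * r))]
  calc (n ! : ℝ) * exp (a * r) ≤ C * (a * r) ^ (n + 1) := h
    _ = C * a * (exp (a * r))⁻¹ * (a ^ n * r ^ (n + 1)) * exp (a * r) := by
      rw [← hpow]; field_simp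

/-- **Minimization of the Gevrey estimates over `n`.**
If `|z| > 1/a` and `|w| ≤ 2M n!/(a^n |z|^{n+1})` for every `n ≥ 0`, then
`|w| ≤ 4M√(2π) a e^{-a|z|}`. -/
theorem exp_decay_of_gevrey_family
    (M a : ℝ) (hM : 0 < M) (ha : 0 < a)
    (z : ℂ) (hz : 1 / a < ‖z‖)
    (w : ℂ)
    (hw : ∀ n : ℕ, ‖w‖ ≤
      2 * M * n.factorial / (a ^ n * ‖z‖ ^ (n + 1))) :
    ‖w‖ ≤
      4 * M * Real.sqrt (2 * Real.pi) * a * Real.exp (-a * ‖z‖) := by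
  have hr : 0 < ‖z‖ := (one_div_pos.2 ha).trans hz
  have ht : 1 ≤ a * ‖z‖ := by
    have := (div_lt_iff₀' ha).1 hz; linarith
  obtain ⟨n, hn⟩ := exists_factorial_mul_exp_le ht
  calc ‖w‖ ≤ 2 * M * (n ! / (a ^ n * ‖z‖ ^ (n + 1))) := by rw [← mul_div_assoc]; exact hw n
    _ ≤ 2 * M * (2 * √(2 * π) * a * exp (-(a * ‖z‖))) := by
      gcongr; exact factorial_div_pow_le_of_factorial_mul_exp_le ha hr hn
    _ = 4 * M * √(2 * π) * a * exp (-a * ‖z‖) := by rw [neg_mul]; ring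
end

section
/- Let M > 0, b > 0, a > 0, and let P be analytic on the open right half-plane {Re z > 0}. Suppose that for every δ ∈ (0, π/2) and every z ≠ 0 with |arg z| ≤ π/2 - δ one has |P(z)| ≤ M exp(b/δ) e^{-a|z|}. Then for every c with 0 < c < a there exist h > 0 and M_h > 0 such that |P(h + iy)| ≤ M_h e^{-c|y|} for all real y. -/
/-!
Taking `δ = Re z / |z|` in the sector bound, which is admissible because `sin δ ≤ δ`, gives
`|P(z)| ≤ M exp((b / Re z - a) |z|)` on the whole right half-plane. On the line `Re z = h`
with `h = b / (a - c)` the exponent is `-c |z| ≤ -c |Im z|`.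
-/

open Real

theorem Complex.abs_arg_le_pi_div_two_sub_of_sin_le {z : ℂ} (hz : z ≠ 0) {δ : ℝ}
    (hδ : δ ∈ Set.Icc (-(π / 2)) (π / 2)) (hsin : Real.sin δ ≤ z.re / ‖z‖) :
    |z.arg| ≤ π / 2 - δ := by
  rw [← cos_arg hz, ← Real.cos_abs, ← Real.cos_pi_div_two_sub] at hsin
  refine (Real.strictAntiOn_cos.le_iff_ge ?_ ?_).mp hsin
  · constructor <;> linarith [hδ.1, hδ.2]
  · exact ⟨abs_nonneg _, abs_arg_le_pi z⟩

theorem norm_le_exp_of_sector_bound {P : ℂ → ℂ} {M b a : ℝ}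
    (hbound : ∀ δ ∈ Set.Ioo (0 : ℝ) (π / 2), ∀ z : ℂ, z ≠ 0 →
      |z.arg| ≤ π / 2 - δ → ‖P z‖ ≤ M * exp (b / δ) * exp (-a * ‖z‖))
    {z : ℂ} (hz : 0 < z.re) :
    ‖P z‖ ≤ M * exp ((b / z.re - a) * ‖z‖) := by
  have hz0 : z ≠ 0 := Complex.ne_zero_of_re_pos hz
  have hnorm : 0 < ‖z‖ := norm_pos_iff.mpr hz0
  set δ := z.re / ‖z‖
  have hδ_pos : 0 < δ := div_pos hz hnorm
  have hδ_le_one : δ ≤ 1 := div_le_one_of_le₀ (Complex.re_le_norm z) hnorm.le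
  have hδ : δ ∈ Set.Ioo (0 : ℝ) (π / 2) := ⟨hδ_pos, by linarith [pi_gt_three]⟩
  have hsector : |z.arg| ≤ π / 2 - δ :=
    Complex.abs_arg_le_pi_div_two_sub_of_sin_le hz0
      ⟨by linarith [pi_pos], hδ.2.le⟩ (sin_le hδ_pos.le)
  calc ‖P z‖ ≤ M * exp (b / δ) * exp (-a * ‖z‖) := hbound δ hδ z hz0 hsector
    _ = M * exp ((b / z.re - a) * ‖z‖) := by
      rw [mul_assoc, ← exp_add]
      congr 2
      simp only [δ]
      field_simp
      ring

theorem havin_exp_decay_on_vertical_line_general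
    (M b a : ℝ) (hM : 0 < M) (hb : 0 < b)
    (P : ℂ → ℂ)
    (hbound : ∀ δ ∈ Set.Ioo (0 : ℝ) (Real.pi / 2), ∀ z : ℂ, z ≠ 0 →
      |z.arg| ≤ Real.pi / 2 - δ →
      ‖P z‖ ≤ M * Real.exp (b / δ) * Real.exp (-a * ‖z‖)) :
    ∀ c : ℝ, 0 < c → c < a →
      ∃ h : ℝ, 0 < h ∧ ∃ M_h : ℝ, 0 < M_h ∧
        ∀ y : ℝ, ‖P (h + Complex.I * y)‖ ≤ M_h * Real.exp (-c * |y|) := by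
  intro c hc hca
  have hac : 0 < a - c := sub_pos.mpr hca
  refine ⟨b / (a - c), div_pos hb hac, M, hM, fun y ↦ ?_⟩
  set z : ℂ := (b / (a - c) : ℝ) + Complex.I * y
  have hre : z.re = b / (a - c) := by simp only [z, Complex.add_re, Complex.ofReal_re,
    Complex.re_mul_ofReal, Complex.I_re, zero_mul, add_zero]
  have him : z.im = y := by simp only [z, Complex.add_im, Complex.ofReal_im,
    Complex.im_mul_ofReal, Complex.I_im, one_mul, zero_add]
  calc ‖P z‖ ≤ M * exp ((b / z.re - a) * ‖z‖) :=
        norm_le_exp_of_sector_bound hbound (hre ▸ div_pos hb hac)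
    _ = M * exp (-c * ‖z‖) := by
      rw [hre, div_div_cancel₀ hb.ne']
      ring_nf
    _ ≤ M * exp (-c * |y|) := by
      have hy : |y| ≤ ‖z‖ := him ▸ Complex.abs_im_le_norm z
      gcongr M * exp ?_
      nlinarith

/-- **Remark 3 (Havin's observation).** If `P` is analytic on the right
half-plane and `|P(z)| ≤ M exp(b/δ) e^{-a|z|}` whenever `|arg z| ≤ π/2 - δ`,
then for every `0 < c < a` there exist `h > 0` and `M_h > 0` such that
`|P(h + iy)| ≤ M_h e^{-c|y|}` for all real `y`. -/
theorem havin_exp_decay_on_vertical_line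
    (M b a : ℝ) (hM : 0 < M) (hb : 0 < b) (ha : 0 < a)
    (P : ℂ → ℂ)
    (hP : DifferentiableOn ℂ P {z : ℂ | 0 < z.re})
    (hbound : ∀ δ ∈ Set.Ioo (0 : ℝ) (Real.pi / 2), ∀ z : ℂ, z ≠ 0 →
      |z.arg| ≤ Real.pi / 2 - δ →
      ‖P z‖ ≤ M * Real.exp (b / δ) * Real.exp (-a * ‖z‖)) :
    ∀ c : ℝ, 0 < c → c < a →
      ∃ h : ℝ, 0 < h ∧ ∃ M_h : ℝ, 0 < M_h ∧
        ∀ y : ℝ, ‖P (h + Complex.I * y)‖ ≤ M_h * Real.exp (-c * |y|) :=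
  havin_exp_decay_on_vertical_line_general M b a hM hb P hbound
end

section
/- Let a > 0, M > 0, δ ∈ (0, π/2), and let P be analytic on the open right half-plane {Re z > 0} with |P(z)| ≤ M e^{-a|z|} for every z ≠ 0 with |arg z| ≤ π/2 - δ. For θ ∈ (-π/2, π/2) define F_θ(t) = ∫₀^∞ e^{t r e^{iθ}} P(r e^{iθ}) e^{iθ} dr on Π_{θ,a} = {σ + iτ : σ cos θ - τ sin θ < a}. Then for every t in the intersection S₁(δ,a) = Π_{π/2-δ,a} ∩ Π_{-π/2+δ,a}, one has F_{π/2-δ}(t) = F_{-π/2+δ}(t). -/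
/-!
In the coordinate `w = log z` the sector `|arg z| ≤ θ₀` becomes the strip `|Im w| ≤ θ₀`, the ray of
angle `θ` becomes the horizontal line `Im w = θ`, and `F_θ(t) = ∫_ℝ G_t(u + iθ) du` with
`G_t(w) = exp(t e^w) P(e^w) e^w`. For `|t| < a` the integrand `G_t` decays at both ends of the strip,
so Cauchy's theorem on the rectangles `[-R, R] × [θ₁, θ₂]` shows that `F_θ(t)` does not depend on
`θ`. Each `F_θ` is holomorphic on its half-plane of convergence; the intersection of two such
half-planes is convex and contains the disc `|t| < a`, so the identity theorem finishes the proof.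
-/

open Complex MeasureTheory Set Filter Topology
open scoped Real Interval

noncomputable def laplaceTransform (f : ℝ → ℂ) (s : ℂ) : ℂ :=
  ∫ r in Ioi (0 : ℝ), cexp (s * r) * f r

section LaplaceTransform

variable {f : ℝ → ℂ} {C b : ℝ}

lemma norm_cexp_mul_mul_le (hf : ∀ r : ℝ, 0 < r → ‖f r‖ ≤ C * Real.exp (-b * r)) {z : ℂ} {c : ℝ}
    (hz : z.re ≤ c) {r : ℝ} (hr : 0 < r) :
    ‖cexp (z * r) * f r‖ ≤ C * Real.exp ((c - b) * r) :=
  calc ‖cexp (z * r) * f r‖ = Real.exp (z.re * r) * ‖f r‖ := by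
        rw [norm_mul, norm_exp, re_mul_ofReal]
    _ ≤ Real.exp (c * r) * (C * Real.exp (-b * r)) := by
        gcongr
        exact hf r hr
    _ = C * Real.exp ((c - b) * r) := by
        rw [sub_mul, sub_eq_add_neg, Real.exp_add, neg_mul]
        ring

lemma integrableOn_cexp_mul_mul (hfm : AEStronglyMeasurable f (volume.restrict (Ioi 0)))
    (hf : ∀ r : ℝ, 0 < r → ‖f r‖ ≤ C * Real.exp (-b * r)) {s : ℂ} (hs : s.re < b) :
    IntegrableOn (fun r : ℝ => cexp (s * r) * f r) (Ioi 0) := by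
  refine Integrable.mono' ((exp_neg_integrableOn_Ioi 0 (sub_pos.2 hs)).const_mul C)
    ((by fun_prop : Continuous fun r : ℝ => cexp (s * r)).aestronglyMeasurable.mul hfm) ?_
  filter_upwards [self_mem_ae_restrict measurableSet_Ioi] with r hr
  simpa only [neg_sub] using norm_cexp_mul_mul_le hf le_rfl hr

lemma hasDerivAt_laplaceTransform (hfm : AEStronglyMeasurable f (volume.restrict (Ioi 0)))
    (hf : ∀ r : ℝ, 0 < r → ‖f r‖ ≤ C * Real.exp (-b * r)) {s : ℂ} (hs : s.re < b) :
    HasDerivAt (laplaceTransform f) (laplaceTransform (fun r => r * f r) s) s := by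
  set ε := (b - s.re) / 2 with hε_def
  have hε : 0 < ε := half_pos (sub_pos.2 hs)
  have hre : ∀ z ∈ Metric.ball s ε, z.re ≤ s.re + ε := fun z hz => by
    have := (abs_re_le_norm (z - s)).trans_lt (mem_ball_iff_norm.1 hz)
    rw [sub_re] at this
    linarith [le_abs_self (z.re - s.re)]
  have hmeas : ∀ z : ℂ, AEStronglyMeasurable (fun r : ℝ => cexp (z * r) * f r)
      (volume.restrict (Ioi 0)) := fun z =>
    (by fun_prop : Continuous fun r : ℝ => cexp (z * r)).aestronglyMeasurable.mul hfm
  have hbound : ∀ᵐ r : ℝ ∂(volume.restrict (Ioi 0)), ∀ z ∈ Metric.ball s ε,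
      ‖cexp (z * r) * (r * f r)‖ ≤ C * (r * Real.exp (-ε * r)) := by
    filter_upwards [self_mem_ae_restrict measurableSet_Ioi] with r (hr : 0 < r) z hz
    calc ‖cexp (z * r) * (r * f r)‖ = r * ‖cexp (z * r) * f r‖ := by
          rw [mul_left_comm, norm_mul, norm_real, Real.norm_of_nonneg hr.le]
      _ ≤ r * (C * Real.exp ((s.re + ε - b) * r)) := by
          gcongr
          exact norm_cexp_mul_mul_le hf (hre z hz) hr
      _ = C * (r * Real.exp (-ε * r)) := by
          rw [show s.re + ε - b = -ε by rw [hε_def]; ring]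
          ring
  have hbound_int : IntegrableOn (fun r : ℝ => C * (r * Real.exp (-ε * r))) (Ioi 0) := by
    have := integrableOn_rpow_mul_exp_neg_mul_rpow (s := 1) (p := 1) (by norm_num) zero_lt_one hε
    simp only [Real.rpow_one] at this
    exact this.const_mul C
  have hderiv : ∀ᵐ r : ℝ ∂(volume.restrict (Ioi 0)), ∀ z ∈ Metric.ball s ε,
      HasDerivAt (fun z : ℂ => cexp (z * r) * f r) (cexp (z * r) * (r * f r)) z :=
    Eventually.of_forall fun r z _ => by
      simpa only [mul_assoc] using ((hasDerivAt_mul_const (r : ℂ)).cexp).mul_const (f r)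
  exact (hasDerivAt_integral_of_dominated_loc_of_deriv_le (Metric.ball_mem_nhds s hε)
    (Eventually.of_forall hmeas) (integrableOn_cexp_mul_mul hfm hf hs)
    ((by fun_prop : Continuous fun r : ℝ => cexp (s * r)).aestronglyMeasurable.mul
      (continuous_ofReal.aestronglyMeasurable.mul hfm))
    hbound hbound_int hderiv).2

lemma differentiableOn_laplaceTransform
    (hfm : AEStronglyMeasurable f (volume.restrict (Ioi 0)))
    (hf : ∀ r : ℝ, 0 < r → ‖f r‖ ≤ C * Real.exp (-b * r)) :
    DifferentiableOn ℂ (laplaceTransform f) {s | s.re < b} := fun _ hs =>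
  (hasDerivAt_laplaceTransform hfm hf hs).differentiableAt.differentiableWithinAt

end LaplaceTransform

lemma integral_Ioi_zero_eq_integral_comp_exp {E : Type*} [NormedAddCommGroup E]
    [NormedSpace ℝ E] (g : ℝ → E) :
    ∫ r in Ioi 0, g r = ∫ u, Real.exp u • g (Real.exp u) := by
  rw [← Real.range_exp, ← image_univ, integral_image_eq_integral_abs_deriv_smul
    MeasurableSet.univ (fun u _ => (Real.hasDerivAt_exp u).hasDerivWithinAt)
    Real.exp_injective.injOn, Measure.restrict_univ]
  simp only [abs_of_pos (Real.exp_pos _)]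

lemma integrable_comp_exp_iff {E : Type*} [NormedAddCommGroup E] [NormedSpace ℝ E]
    (g : ℝ → E) :
    Integrable (fun u => Real.exp u • g (Real.exp u)) ↔ IntegrableOn g (Ioi 0) := by
  rw [← Real.range_exp, ← image_univ, integrableOn_image_iff_integrableOn_abs_deriv_smul
    MeasurableSet.univ (fun u _ => (Real.hasDerivAt_exp u).hasDerivWithinAt)
    Real.exp_injective.injOn, integrableOn_univ]
  simp only [abs_of_pos (Real.exp_pos _)]

lemma tendsto_exp_mul_exp_mul_exp_cocompact {c : ℝ} (hc : c < 0) :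
    Tendsto (fun x => Real.exp (c * Real.exp x) * Real.exp x) (cocompact ℝ) (𝓝 0) := by
  have hzero : Tendsto (fun ρ => Real.exp (c * ρ) * ρ) (𝓝 0) (𝓝 0) := by
    simpa using ((by fun_prop : Continuous fun ρ => Real.exp (c * ρ) * ρ).tendsto 0)
  have hinf : Tendsto (fun ρ => Real.exp (c * ρ) * ρ) atTop (𝓝 0) := by
    have := ((Real.tendsto_pow_mul_exp_neg_atTop_nhds_zero 1).comp
      (tendsto_id.const_mul_atTop (neg_pos.2 hc))).const_mul (-c)⁻¹
    rw [mul_zero] at this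
    refine this.congr fun ρ => ?_
    have := hc.ne
    simp only [Function.comp_apply, id, pow_one, neg_mul, neg_neg]
    field_simp
  rw [cocompact_eq_atBot_atTop]
  exact tendsto_sup.2 ⟨hzero.comp Real.tendsto_exp_atBot, hinf.comp Real.tendsto_exp_atTop⟩

theorem integral_add_mul_I_eq_of_tendsto_cocompact {E : Type*} [NormedAddCommGroup E]
    [NormedSpace ℂ E] [CompleteSpace E] {G : ℂ → E} {y₁ y₂ : ℝ}
    (hG : DifferentiableOn ℂ G (im ⁻¹' [[y₁, y₂]]))
    (h₁ : Integrable fun x : ℝ => G (x + y₁ * I)) (h₂ : Integrable fun x : ℝ => G (x + y₂ * I))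
    (hvert : Tendsto (fun x : ℝ => ∫ y in y₁..y₂, G (x + y * I)) (cocompact ℝ) (𝓝 0)) :
    ∫ x : ℝ, G (x + y₁ * I) = ∫ x : ℝ, G (x + y₂ * I) := by
  have hrect : ∀ R : ℝ, (∫ x in -R..R, G (x + y₁ * I)) - (∫ x in -R..R, G (x + y₂ * I)) +
      I • (∫ y in y₁..y₂, G (R + y * I)) - I • (∫ y in y₁..y₂, G ((-R : ℝ) + y * I)) = 0 :=
    fun R => integral_boundary_rect_eq_zero_of_differentiableOn G ⟨-R, y₁⟩ ⟨R, y₂⟩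
      (hG.mono fun _ hw => hw.2)
  have hlim := (((intervalIntegral_tendsto_integral h₁ tendsto_neg_atTop_atBot tendsto_id).sub
    (intervalIntegral_tendsto_integral h₂ tendsto_neg_atTop_atBot tendsto_id)).add
    ((hvert.mono_left atTop_le_cocompact).const_smul I)).sub
    (((hvert.mono_left atBot_le_cocompact).comp tendsto_neg_atTop_atBot).const_smul I)
  rw [smul_zero, add_zero, sub_zero] at hlim
  exact sub_eq_zero.1 (tendsto_nhds_unique hlim (tendsto_const_nhds.congr fun R => (hrect R).symm))

noncomputable def rayLaplace (P : ℂ → ℂ) (θ : ℝ) (t : ℂ) : ℂ :=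
  laplaceTransform (fun r => P (r * cexp (θ * I)) * cexp (θ * I)) (t * cexp (θ * I))

noncomputable def logIntegrand (P : ℂ → ℂ) (t w : ℂ) : ℂ :=
  cexp (t * cexp w) * P (cexp w) * cexp w

lemma rayLaplace_apply (P : ℂ → ℂ) (θ : ℝ) (t : ℂ) :
    rayLaplace P θ t = ∫ r in Ioi (0 : ℝ),
      cexp (t * r * cexp (θ * I)) * P (r * cexp (θ * I)) * cexp (θ * I) := by
  simp only [rayLaplace, laplaceTransform, mul_right_comm t, mul_assoc]

lemma re_mul_exp_ofReal_mul_I (t : ℂ) (θ : ℝ) :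
    (t * cexp (θ * I)).re = t.re * Real.cos θ - t.im * Real.sin θ := by
  simp [mul_re, exp_ofReal_mul_I_re, exp_ofReal_mul_I_im]

lemma re_exp_pos {w : ℂ} (hw : |w.im| < π / 2) : 0 < (cexp w).re := by
  rw [exp_re]
  exact mul_pos (Real.exp_pos _) (Real.cos_pos_of_mem_Ioo (abs_lt.1 hw))

lemma logIntegrand_add_mul_I (P : ℂ → ℂ) (t : ℂ) (u θ : ℝ) :
    logIntegrand P t (u + θ * I) = Real.exp u •
      (cexp (t * cexp (θ * I) * (Real.exp u : ℝ)) *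
        (P ((Real.exp u : ℝ) * cexp (θ * I)) * cexp (θ * I))) := by
  simp only [logIntegrand, exp_add, ← ofReal_exp, real_smul]
  ring_nf

lemma rayLaplace_eq_integral_logIntegrand (P : ℂ → ℂ) (θ : ℝ) (t : ℂ) :
    rayLaplace P θ t = ∫ u : ℝ, logIntegrand P t (u + θ * I) := by
  simp only [rayLaplace, laplaceTransform, integral_Ioi_zero_eq_integral_comp_exp,
    logIntegrand_add_mul_I]

section Sector

variable {P : ℂ → ℂ} {a M θ₀ θ θ₁ θ₂ : ℝ} {t : ℂ}

lemma norm_comp_exp_le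
    (hbound : ∀ z : ℂ, z ≠ 0 → |z.arg| ≤ θ₀ → ‖P z‖ ≤ M * Real.exp (-a * ‖z‖))
    (hθ₀ : θ₀ < π) {w : ℂ} (hw : |w.im| ≤ θ₀) :
    ‖P (cexp w)‖ ≤ M * Real.exp (-a * Real.exp w.re) := by
  have harg : (cexp w).arg = w.im := by
    rw [← log_im, log_exp (by linarith [neg_abs_le w.im]) (by linarith [le_abs_self w.im])]
  simpa [norm_exp] using hbound _ (exp_ne_zero w) (harg ▸ hw)

lemma norm_ray_le
    (hbound : ∀ z : ℂ, z ≠ 0 → |z.arg| ≤ θ₀ → ‖P z‖ ≤ M * Real.exp (-a * ‖z‖))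
    (hθ₀ : θ₀ < π) (hθ : |θ| ≤ θ₀) :
    ∀ r : ℝ, 0 < r → ‖P (r * cexp (θ * I)) * cexp (θ * I)‖ ≤ M * Real.exp (-a * r) := by
  intro r hr
  have hray : (r : ℂ) * cexp (θ * I) = cexp (Real.log r + θ * I) := by
    rw [exp_add, ← ofReal_exp, Real.exp_log hr]
  rw [norm_mul, norm_exp_ofReal_mul_I, mul_one, hray]
  simpa [Real.exp_log hr] using norm_comp_exp_le hbound hθ₀ (w := Real.log r + θ * I)
    (by simpa using hθ)

lemma continuousOn_ray (hP : DifferentiableOn ℂ P {z : ℂ | 0 < z.re}) (hθ : |θ| < π / 2) :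
    ContinuousOn (fun r : ℝ => P (r * cexp (θ * I)) * cexp (θ * I)) (Ioi 0) := by
  refine (hP.continuousOn.comp (by fun_prop) fun r (hr : 0 < r) => ?_).mul continuousOn_const
  have := re_exp_pos (w := θ * I) (by simpa using hθ)
  simp only [mem_ofPred_eq, re_ofReal_mul]
  exact mul_pos hr this

lemma differentiableOn_rayLaplace (hP : DifferentiableOn ℂ P {z : ℂ | 0 < z.re})
    (hbound : ∀ z : ℂ, z ≠ 0 → |z.arg| ≤ θ₀ → ‖P z‖ ≤ M * Real.exp (-a * ‖z‖))
    (hθ₀ : θ₀ < π / 2) (hθ : |θ| ≤ θ₀) :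
    DifferentiableOn ℂ (rayLaplace P θ) {t | (t * cexp (θ * I)).re < a} :=
  (differentiableOn_laplaceTransform
    ((continuousOn_ray hP (hθ.trans_lt hθ₀)).aestronglyMeasurable measurableSet_Ioi)
    (norm_ray_le hbound (hθ₀.trans (by linarith [Real.pi_pos])) hθ)).comp
    (differentiableOn_id.mul_const _) fun _ ht => ht

lemma integrable_logIntegrand (hP : DifferentiableOn ℂ P {z : ℂ | 0 < z.re})
    (hbound : ∀ z : ℂ, z ≠ 0 → |z.arg| ≤ θ₀ → ‖P z‖ ≤ M * Real.exp (-a * ‖z‖))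
    (hθ₀ : θ₀ < π / 2) (hθ : |θ| ≤ θ₀) (ht : (t * cexp (θ * I)).re < a) :
    Integrable fun u : ℝ => logIntegrand P t (u + θ * I) := by
  simp only [logIntegrand_add_mul_I]
  exact (integrable_comp_exp_iff _).2 (integrableOn_cexp_mul_mul
    ((continuousOn_ray hP (hθ.trans_lt hθ₀)).aestronglyMeasurable measurableSet_Ioi)
    (norm_ray_le hbound (hθ₀.trans (by linarith [Real.pi_pos])) hθ) ht)

lemma differentiableAt_logIntegrand (hP : DifferentiableOn ℂ P {z : ℂ | 0 < z.re}) (t : ℂ)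
    {w : ℂ} (hw : |w.im| < π / 2) : DifferentiableAt ℂ (logIntegrand P t) w := by
  have hPw : DifferentiableAt ℂ P (cexp w) :=
    hP.differentiableAt ((isOpen_lt continuous_const continuous_re).mem_nhds (re_exp_pos hw))
  unfold logIntegrand
  fun_prop

lemma norm_logIntegrand_le
    (hbound : ∀ z : ℂ, z ≠ 0 → |z.arg| ≤ θ₀ → ‖P z‖ ≤ M * Real.exp (-a * ‖z‖))
    (hθ₀ : θ₀ < π) {w : ℂ} (hw : |w.im| ≤ θ₀) :
    ‖logIntegrand P t w‖ ≤ M * (Real.exp ((‖t‖ - a) * Real.exp w.re) * Real.exp w.re) := by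
  have hexp : (t * cexp w).re ≤ ‖t‖ * Real.exp w.re := by
    simpa [norm_exp] using re_le_norm (t * cexp w)
  calc ‖logIntegrand P t w‖
      = Real.exp (t * cexp w).re * ‖P (cexp w)‖ * Real.exp w.re := by
        simp only [logIntegrand, norm_mul, norm_exp]
    _ ≤ Real.exp (‖t‖ * Real.exp w.re) * (M * Real.exp (-a * Real.exp w.re)) * Real.exp w.re := by
        gcongr
        exact norm_comp_exp_le hbound hθ₀ hw
    _ = M * (Real.exp ((‖t‖ - a) * Real.exp w.re) * Real.exp w.re) := by
        rw [sub_mul, sub_eq_add_neg, Real.exp_add, neg_mul]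
        ring

lemma tendsto_integral_logIntegrand_cocompact
    (hbound : ∀ z : ℂ, z ≠ 0 → |z.arg| ≤ θ₀ → ‖P z‖ ≤ M * Real.exp (-a * ‖z‖))
    (hθ₀ : θ₀ < π) (hθ₁ : |θ₁| ≤ θ₀) (hθ₂ : |θ₂| ≤ θ₀) (ht : ‖t‖ < a) :
    Tendsto (fun x : ℝ => ∫ y in θ₁..θ₂, logIntegrand P t (x + y * I)) (cocompact ℝ) (𝓝 0) := by
  refine squeeze_zero_norm (fun x => intervalIntegral.norm_integral_le_of_norm_le_const
    (C := M * (Real.exp ((‖t‖ - a) * Real.exp x) * Real.exp x)) fun y hy => ?_) ?_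
  · have hy' := uIcc_subset_Icc (abs_le.1 hθ₁) (abs_le.1 hθ₂) (uIoc_subset_uIcc hy)
    simpa using norm_logIntegrand_le (t := t) hbound hθ₀ (w := x + y * I)
      (by simpa [abs_le] using hy')
  · simpa using ((tendsto_exp_mul_exp_mul_exp_cocompact (sub_neg.2 ht)).const_mul M).mul_const
      |θ₂ - θ₁|

theorem rayLaplace_eq_of_norm_lt (hP : DifferentiableOn ℂ P {z : ℂ | 0 < z.re})
    (hbound : ∀ z : ℂ, z ≠ 0 → |z.arg| ≤ θ₀ → ‖P z‖ ≤ M * Real.exp (-a * ‖z‖))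
    (hθ₀ : θ₀ < π / 2) (hθ₁ : |θ₁| ≤ θ₀) (hθ₂ : |θ₂| ≤ θ₀) (ht : ‖t‖ < a) :
    rayLaplace P θ₁ t = rayLaplace P θ₂ t := by
  have hre : ∀ θ : ℝ, (t * cexp (θ * I)).re < a := fun θ =>
    (re_le_norm _).trans_lt (by rwa [norm_mul, norm_exp_ofReal_mul_I, mul_one])
  simp only [rayLaplace_eq_integral_logIntegrand]
  refine integral_add_mul_I_eq_of_tendsto_cocompact (fun w hw => ?_)
    (integrable_logIntegrand hP hbound hθ₀ hθ₁ (hre θ₁))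
    (integrable_logIntegrand hP hbound hθ₀ hθ₂ (hre θ₂))
    (tendsto_integral_logIntegrand_cocompact hbound (hθ₀.trans (by linarith [Real.pi_pos]))
      hθ₁ hθ₂ ht)
  have hw' := uIcc_subset_Icc (abs_le.1 hθ₁) (abs_le.1 hθ₂) hw
  exact (differentiableAt_logIntegrand hP t ((abs_le.2 hw').trans_lt hθ₀)).differentiableWithinAt

theorem rayLaplace_eq (hP : DifferentiableOn ℂ P {z : ℂ | 0 < z.re})
    (hbound : ∀ z : ℂ, z ≠ 0 → |z.arg| ≤ θ₀ → ‖P z‖ ≤ M * Real.exp (-a * ‖z‖))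
    (ha : 0 < a) (hθ₀ : θ₀ < π / 2) (hθ₁ : |θ₁| ≤ θ₀) (hθ₂ : |θ₂| ≤ θ₀)
    (ht₁ : (t * cexp (θ₁ * I)).re < a) (ht₂ : (t * cexp (θ₂ * I)).re < a) :
    rayLaplace P θ₁ t = rayLaplace P θ₂ t := by
  have hopen : ∀ θ : ℝ, IsOpen {t : ℂ | (t * cexp (θ * I)).re < a} := fun θ =>
    isOpen_lt (by fun_prop) continuous_const
  have hconvex : ∀ θ : ℝ, Convex ℝ {t : ℂ | (t * cexp (θ * I)).re < a} := fun θ =>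
    convex_halfSpace_lt ⟨fun x y => by simp [add_mul], fun c x => by simp [mul_assoc]⟩ a
  set S := {t : ℂ | (t * cexp (θ₁ * I)).re < a} ∩ {t : ℂ | (t * cexp (θ₂ * I)).re < a}
  have hS : IsOpen S := (hopen θ₁).inter (hopen θ₂)
  have hnear_zero : rayLaplace P θ₁ =ᶠ[𝓝 0] rayLaplace P θ₂ :=
    eventually_of_mem (Metric.ball_mem_nhds 0 ha) fun t ht =>
      rayLaplace_eq_of_norm_lt hP hbound hθ₀ hθ₁ hθ₂ (mem_ball_zero_iff.1 ht)
  exact AnalyticOnNhd.eqOn_of_preconnected_of_eventuallyEq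
    (((differentiableOn_rayLaplace hP hbound hθ₀ hθ₁).mono inter_subset_left).analyticOnNhd hS)
    (((differentiableOn_rayLaplace hP hbound hθ₀ hθ₂).mono inter_subset_right).analyticOnNhd hS)
    ((hconvex θ₁).inter (hconvex θ₂)).isPreconnected (by simp [ha]) hnear_zero ⟨ht₁, ht₂⟩

end Sector

theorem laplace_transforms_agree_on_left_sector_general
    (a M δ : ℝ) (ha : 0 < a)
    (hδ : δ ∈ Set.Ioo (0 : ℝ) (Real.pi / 2))
    (P : ℂ → ℂ)
    (hP : DifferentiableOn ℂ P {z : ℂ | 0 < z.re})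
    (hbound : ∀ z : ℂ, z ≠ 0 → |z.arg| ≤ Real.pi / 2 - δ →
      ‖P z‖ ≤ M * Real.exp (-a * ‖z‖)) :
    ∀ t : ℂ,
      t.re * Real.cos (Real.pi / 2 - δ) - t.im * Real.sin (Real.pi / 2 - δ) < a →
      t.re * Real.cos (-(Real.pi / 2) + δ) - t.im * Real.sin (-(Real.pi / 2) + δ) < a →
      (∫ r in Set.Ioi (0 : ℝ),
          Complex.exp (t * r * Complex.exp ((Real.pi / 2 - δ) * Complex.I)) *
            P (r * Complex.exp ((Real.pi / 2 - δ) * Complex.I)) *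
            Complex.exp ((Real.pi / 2 - δ) * Complex.I)) =
      (∫ r in Set.Ioi (0 : ℝ),
          Complex.exp (t * r * Complex.exp ((-(Real.pi / 2) + δ) * Complex.I)) *
            P (r * Complex.exp ((-(Real.pi / 2) + δ) * Complex.I)) *
            Complex.exp ((-(Real.pi / 2) + δ) * Complex.I)) := by
  intro t h₁ h₂
  obtain ⟨hδ₀, hδπ⟩ := hδ
  have hθ₁ : |π / 2 - δ| ≤ π / 2 - δ := (abs_of_nonneg (by linarith)).le
  have hθ₂ : |-(π / 2) + δ| ≤ π / 2 - δ := by rw [abs_le]; constructor <;> linarith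
  have key := rayLaplace_eq hP hbound ha (by linarith) hθ₁ hθ₂
    (by rwa [re_mul_exp_ofReal_mul_I]) (by rwa [re_mul_exp_ofReal_mul_I])
  rw [rayLaplace_apply, rayLaplace_apply] at key
  push_cast at key
  exact key

/-- **Agreement of the two boundary Laplace transforms on the left sector.**
Let `a, M > 0`, `δ ∈ (0, π/2)`, and let `P` be analytic on the right
half-plane with `|P(z)| ≤ M e^{-a|z|}` on the closed sub-sector
`|arg z| ≤ π/2 - δ`. Then for every `t` in
`S₁(δ,a) = Π_{π/2-δ,a} ∩ Π_{-π/2+δ,a}` one has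
`F_{π/2-δ}(t) = F_{-π/2+δ}(t)`, where
`F_θ(t) = ∫₀^∞ e^{t r e^{iθ}} P(r e^{iθ}) e^{iθ} dr`. -/
theorem laplace_transforms_agree_on_left_sector
    (a M δ : ℝ) (ha : 0 < a) (hM : 0 < M)
    (hδ : δ ∈ Set.Ioo (0 : ℝ) (Real.pi / 2))
    (P : ℂ → ℂ)
    (hP : DifferentiableOn ℂ P {z : ℂ | 0 < z.re})
    (hbound : ∀ z : ℂ, z ≠ 0 → |z.arg| ≤ Real.pi / 2 - δ →
      ‖P z‖ ≤ M * Real.exp (-a * ‖z‖)) :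
    ∀ t : ℂ,
      t.re * Real.cos (Real.pi / 2 - δ) - t.im * Real.sin (Real.pi / 2 - δ) < a →
      t.re * Real.cos (-(Real.pi / 2) + δ) - t.im * Real.sin (-(Real.pi / 2) + δ) < a →
      (∫ r in Set.Ioi (0 : ℝ),
          Complex.exp (t * r * Complex.exp ((Real.pi / 2 - δ) * Complex.I)) *
            P (r * Complex.exp ((Real.pi / 2 - δ) * Complex.I)) *
            Complex.exp ((Real.pi / 2 - δ) * Complex.I)) =
      (∫ r in Set.Ioi (0 : ℝ),
          Complex.exp (t * r * Complex.exp ((-(Real.pi / 2) + δ) * Complex.I)) *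
            P (r * Complex.exp ((-(Real.pi / 2) + δ) * Complex.I)) *
            Complex.exp ((-(Real.pi / 2) + δ) * Complex.I)) :=
  laplace_transforms_agree_on_left_sector_general a M δ ha hδ P hP hbound
end

section
/- For every nonzero complex number z with |arg z| < π/2, the quantity K(z) = sup_{u ≥ 0} |z² / (u² + z²)| satisfies: K(z) = 1 if |arg z| < π/4, and K(z) = 1 / sin(2|arg z|) if π/4 ≤ |arg z| < π/2. -/
/-!
Put `w = z²`, so that `‖w / (u² + w)‖ = ‖w‖ / ‖u² + w‖` and `K(z)` is `‖w‖` divided by the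
distance from `-w` to the half-line `[0, ∞)`. When `Re w ≥ 0`, i.e. `|arg z| ≤ π/4`, the nearest
point is `0` and `K(z) = 1`; otherwise it is `-Re w`, at distance `|Im w| = ‖z‖² sin (2 |arg z|)`.
-/

open Complex

namespace Complex

lemma norm_le_norm_ofReal_add {w : ℂ} (hw : 0 ≤ w.re) {t : ℝ} (ht : 0 ≤ t) :
    ‖w‖ ≤ ‖(t : ℂ) + w‖ := by
  rw [← sq_le_sq₀ (norm_nonneg _) (norm_nonneg _), Complex.sq_norm, Complex.sq_norm,
    normSq_apply, normSq_apply]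
  simp only [add_re, add_im, ofReal_re, ofReal_im, zero_add]
  nlinarith

lemma iSup_norm_div_sq_add_of_re_nonneg {w : ℂ} (hw : w ≠ 0) (hre : 0 ≤ w.re) :
    ⨆ u : Set.Ici (0 : ℝ), ‖w / ((u : ℂ) ^ 2 + w)‖ = 1 := by
  refine ciSup_eq_of_forall_le_of_forall_lt_exists_gt (fun ⟨u, _⟩ => ?_)
    fun _ h => ⟨⟨0, Set.self_mem_Ici⟩, by simpa [div_self hw] using h⟩
  rw [norm_div, ← ofReal_pow]
  exact div_le_one_of_le₀ (norm_le_norm_ofReal_add hre (sq_nonneg u)) (norm_nonneg _)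

lemma iSup_norm_div_sq_add_of_re_nonpos {w : ℂ} (hre : w.re ≤ 0) (him : w.im ≠ 0) :
    ⨆ u : Set.Ici (0 : ℝ), ‖w / ((u : ℂ) ^ 2 + w)‖ = ‖w‖ / |w.im| := by
  have hbound (u : ℝ) : |w.im| ≤ ‖(u : ℂ) ^ 2 + w‖ := by
    have := abs_im_le_norm ((u : ℂ) ^ 2 + w)
    rwa [add_im, ← ofReal_pow, ofReal_im, zero_add, ofReal_pow] at this
  have hattain : ((√(-w.re) : ℝ) : ℂ) ^ 2 + w = w.im * I := by
    rw [← ofReal_pow, Real.sq_sqrt (neg_nonneg.mpr hre)]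
    apply Complex.ext <;> simp
  refine ciSup_eq_of_forall_le_of_forall_lt_exists_gt (fun ⟨u, _⟩ => ?_)
    fun _ h => ⟨⟨√(-w.re), Real.sqrt_nonneg _⟩, ?_⟩
  · rw [norm_div]
    exact div_le_div_of_nonneg_left (norm_nonneg _) (abs_pos.mpr him) (hbound u)
  · simpa [hattain] using h

lemma sq_eq_norm_sq_mul_exp_two_arg (z : ℂ) :
    z ^ 2 = ((‖z‖ ^ 2 : ℝ) : ℂ) * exp ((2 * z.arg : ℝ) * I) := by
  conv_lhs => rw [← norm_mul_exp_arg_mul_I z]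
  rw [mul_pow, ← exp_nat_mul]
  push_cast
  ring_nf

lemma re_sq_eq_norm_sq_mul_cos (z : ℂ) : (z ^ 2).re = ‖z‖ ^ 2 * Real.cos (2 * |z.arg|) := by
  rw [sq_eq_norm_sq_mul_exp_two_arg, re_ofReal_mul, exp_ofReal_mul_I_re, ← Real.cos_abs,
    abs_mul, abs_two]

lemma abs_im_sq_eq_norm_sq_mul_sin (z : ℂ) (h : |z.arg| ≤ Real.pi / 2) :
    |(z ^ 2).im| = ‖z‖ ^ 2 * Real.sin (2 * |z.arg|) := by
  have h2 : |2 * z.arg| = 2 * |z.arg| := by rw [abs_mul, abs_two]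
  rw [sq_eq_norm_sq_mul_exp_two_arg, im_ofReal_mul, exp_ofReal_mul_I_im, abs_mul,
    abs_of_nonneg (by positivity),
    Real.abs_sin_eq_sin_abs_of_abs_le_pi (by rw [h2]; linarith), h2]

end Complex

/-- **Explicit value of the constant `K(z)` in Stirling's remainder bound.**
For `z ≠ 0` with `|arg z| < π/2`, the quantity
`K(z) = sup_{u ≥ 0} |z²/(u² + z²)|` equals `1` when `|arg z| < π/4`, and
equals `1/sin(2|arg z|)` when `π/4 ≤ |arg z| < π/2`. -/
theorem stirling_constant_K_formula
    (z : ℂ) (hz : z ≠ 0) (harg : |z.arg| < Real.pi / 2) :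
    (|z.arg| < Real.pi / 4 →
      (⨆ u : Set.Ici (0 : ℝ),
        ‖z ^ 2 / (((u : ℝ) : ℂ) ^ 2 + z ^ 2)‖) = 1) ∧
    (Real.pi / 4 ≤ |z.arg| →
      (⨆ u : Set.Ici (0 : ℝ),
        ‖z ^ 2 / (((u : ℝ) : ℂ) ^ 2 + z ^ 2)‖) =
          1 / Real.sin (2 * |z.arg|)) := by
  have hnorm : 0 < ‖z‖ ^ 2 := by positivity
  have harg₀ := abs_nonneg z.arg
  refine ⟨fun hsmall => ?_, fun hlarge => ?_⟩
  · refine iSup_norm_div_sq_add_of_re_nonneg (pow_ne_zero 2 hz) ?_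
    rw [re_sq_eq_norm_sq_mul_cos]
    exact mul_nonneg hnorm.le (Real.cos_nonneg_of_mem_Icc ⟨by linarith, by linarith⟩)
  · have hsin : 0 < Real.sin (2 * |z.arg|) :=
      Real.sin_pos_of_pos_of_lt_pi (by linarith) (by linarith)
    have him := abs_im_sq_eq_norm_sq_mul_sin z harg.le
    rw [iSup_norm_div_sq_add_of_re_nonpos, him, norm_pow, div_mul_cancel_left₀ hnorm.ne', one_div]
    · rw [re_sq_eq_norm_sq_mul_cos]
      exact mul_nonpos_of_nonneg_of_nonpos hnorm.le
        (Real.cos_nonpos_of_pi_div_two_le_of_le (by linarith) (by linarith))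
    · rw [← abs_pos, him]
      positivity
end
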